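/- arXiv:1305.3370 — 7 statements merged into one kernel-verified Lean document; each statement's English description precedes it below -/
import Mathlib

section
/- Let V be an n-dimensional real inner product space, θ a quadratic form on V, τ a covector on V, and suppose θ − τ⊗τ is p-positive semi-definite (every sum of p eigenvalues of the symmetric matrix of θ − τ⊗τ is nonnegative). Let F_θ be the associated operator on p-forms. Then for every (p−1)-form ξ, the p-form τ ∧ ξ lies in the image of F_θ. -/
/-- The operator `F_θ = Σ θ_{jk} ω^k ∧ (e_j ⌟ ·)` on coefficient arrays of `p`-forms. -/
def FopMat {n p : ℕ} (θ : Matrix (Fin n) (Fin n) ℝ)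
    (g : (Fin p → Fin n) → ℝ) : (Fin p → Fin n) → ℝ :=
  fun J => ∑ a : Fin p, ∑ i : Fin n, θ (J a) i * g (Function.update J a i)

/-- `g` is the fully antisymmetric coefficient array of a form. -/
def IsAlt {n p : ℕ} (g : (Fin p → Fin n) → ℝ) : Prop :=
  ∀ (J : Fin p → Fin n) (σ : Equiv.Perm (Fin p)),
    g (J ∘ σ) = ((Equiv.Perm.sign σ : ℤ) : ℝ) * g J

/-- Coefficients of the wedge product `τ ∧ ξ` of a covector `τ` with an `m`-form `ξ`. -/
def wedge1 {n m : ℕ} (τ : Fin n → ℝ) (ξ : (Fin m → Fin n) → ℝ) :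
    (Fin (m + 1) → Fin n) → ℝ :=
  fun J => ∑ a : Fin (m + 1), (-1 : ℝ) ^ (a : ℕ) * τ (J a) * ξ (fun b => J (a.succAbove b))

/-!
`F_θ` is symmetric for the dot product and preserves alternating arrays, so on them its image is
the orthogonal complement of its kernel, and it suffices to show `τ ∧ ξ ⊥ ker F_θ`. Split
`F_θ = F_η + F_{τ⊗τ}` with `η = θ - τ⊗τ`. Rotating every slot into an eigenbasis of `η`
diagonalises `F_η`, with eigenvalue `λ_{k_1} + ⋯ + λ_{k_p}` on the basis array indexed by
`(k_1, …, k_p)`; alternating arrays only see injective indices, where this sum is `≥ 0` by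
`p`-positivity. Moreover `F_{τ⊗τ} = τ ∧ (X_τ ⌟ ·)` and `⟨τ ∧ ξ, g⟩ = p ⟨ξ, X_τ ⌟ g⟩`, so
`⟨F_{τ⊗τ} g, g⟩ = p ‖X_τ ⌟ g‖²`. Hence `F_θ g = 0` forces `X_τ ⌟ g = 0`, and then
`⟨τ ∧ ξ, g⟩ = 0`.
-/

open Finset Function Matrix

section Alternating

variable {n m p : ℕ}

theorem IsAlt.apply_eq_zero_of_not_injective {g : (Fin p → Fin n) → ℝ} (hg : IsAlt g)
    {J : Fin p → Fin n} (hJ : ¬ Injective J) : g J = 0 := by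
  obtain ⟨b, c, hJbc, hbc⟩ := not_injective_iff.mp hJ
  have hswap : J ∘ Equiv.swap b c = J := by
    ext x
    rcases eq_or_ne x b with rfl | hxb
    · simp [hJbc]
    rcases eq_or_ne x c with rfl | hxc
    · simp [hJbc]
    · simp [Equiv.swap_apply_of_ne_of_ne hxb hxc]
  have := hg J (Equiv.swap b c)
  rw [hswap, Equiv.Perm.sign_swap hbc] at this
  push_cast at this
  linarith

theorem IsAlt.apply_insertNth {g : (Fin (m + 1) → Fin n) → ℝ} (hg : IsAlt g)
    (a : Fin (m + 1)) (j : Fin n) (J : Fin m → Fin n) :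
    g (a.insertNth j J) = (-1) ^ (a : ℕ) * g (Fin.cons j J) := by
  rw [← Fin.cons_comp_cycleRange, hg, Fin.sign_cycleRange]
  push_cast
  rfl

theorem isAlt_of_comp_swap_castSucc_succ {g : (Fin (m + 1) → Fin n) → ℝ}
    (hg : ∀ J (c : Fin m), g (J ∘ Equiv.swap c.castSucc c.succ) = -g J) : IsAlt g := by
  intro J σ
  have hσ : σ ∈ Submonoid.closure (Set.range fun c : Fin m => Equiv.swap c.castSucc c.succ) := by
    rw [Equiv.Perm.mclosure_swap_castSucc_succ]
    trivial
  induction hσ using Submonoid.closure_induction generalizing J with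
  | mem _ hx =>
    obtain ⟨c, rfl⟩ := hx
    rw [hg, Equiv.Perm.sign_swap (Fin.castSucc_lt_succ (i := c)).ne]
    simp
  | one => simp
  | mul x y _ _ hx hy =>
    rw [Equiv.Perm.coe_mul, ← comp_assoc, hy, hx, map_mul]
    push_cast
    ring

def altSubmodule (n p : ℕ) : Submodule ℝ ((Fin p → Fin n) → ℝ) where
  carrier := {g | IsAlt g}
  add_mem' {g h} hg hh J σ := by simp only [Pi.add_apply, hg J σ, hh J σ]; ring
  zero_mem' J σ := by simp
  smul_mem' c g hg J σ := by simp only [Pi.smul_apply, smul_eq_mul, hg J σ]; ring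

theorem sum_insertNth {M : Type*} [AddCommMonoid M] (a : Fin (m + 1))
    (f : (Fin (m + 1) → Fin n) → M) :
    ∑ J, f J = ∑ j, ∑ J' : Fin m → Fin n, f (a.insertNth j J') := by
  rw [← Fintype.sum_prod_type', ← (Fin.insertNthEquiv (fun _ => Fin n) a).sum_comp]
  rfl

end Alternating

section FormOperator

variable {n p : ℕ}

theorem IsAlt.fopMat (θ : Matrix (Fin n) (Fin n) ℝ) {g : (Fin p → Fin n) → ℝ} (hg : IsAlt g) :
    IsAlt (FopMat θ g) := by
  intro J σ
  have update_comp (a : Fin p) (i : Fin n) : update (J ∘ σ) a i = update J (σ a) i ∘ σ := by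
    simpa using (update_comp_equiv J σ (σ a) i).symm
  simp only [FopMat, Function.comp_apply, update_comp, Finset.mul_sum]
  exact Fintype.sum_equiv σ _ _ fun a => Finset.sum_congr rfl fun i _ => by rw [hg]; ring

theorem fopMat_add_left (A B : Matrix (Fin n) (Fin n) ℝ) (g : (Fin p → Fin n) → ℝ) :
    FopMat (A + B) g = FopMat A g + FopMat B g := by
  ext J
  simp only [FopMat, Pi.add_apply, Matrix.add_apply, add_mul, Finset.sum_add_distrib]

def fopMatₗ (θ : Matrix (Fin n) (Fin n) ℝ) :
    ((Fin p → Fin n) → ℝ) →ₗ[ℝ] (Fin p → Fin n) → ℝ where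
  toFun := FopMat θ
  map_add' g h := by
    ext J
    simp only [FopMat, Pi.add_apply, mul_add, Finset.sum_add_distrib]
  map_smul' c g := by
    ext J
    simp only [FopMat, Pi.smul_apply, smul_eq_mul, RingHom.id_apply, Finset.mul_sum]
    exact Finset.sum_congr rfl fun a _ => Finset.sum_congr rfl fun i _ => by ring

theorem fopMat_dotProduct_comm {θ : Matrix (Fin n) (Fin n) ℝ} (hθ : θ.IsSymm)
    (g h : (Fin p → Fin n) → ℝ) : FopMat θ g ⬝ᵥ h = g ⬝ᵥ FopMat θ h := by
  rcases p with _ | m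
  · simp [FopMat, dotProduct]
  have slot (a : Fin (m + 1)) :
      ∑ J, ∑ i, θ (J a) i * g (update J a i) * h J
        = ∑ J, ∑ i, g J * (θ (J a) i * h (update J a i)) := by
    simp only [sum_insertNth a, Fin.insertNth_apply_same, Fin.update_insertNth]
    rw [Finset.sum_comm]
    conv_rhs => rw [Finset.sum_comm]
    refine Finset.sum_congr rfl fun J' _ => ?_
    rw [Finset.sum_comm]
    exact Finset.sum_congr rfl fun i _ => Finset.sum_congr rfl fun j _ => by
      rw [hθ.apply]; ring
  simp only [dotProduct, FopMat, Finset.sum_mul, Finset.mul_sum]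
  rw [Finset.sum_comm]
  conv_rhs => rw [Finset.sum_comm]
  exact Finset.sum_congr rfl fun a _ => slot a

end FormOperator

section Wedge

variable {n m : ℕ}

def interiorProduct (τ : Fin n → ℝ) (g : (Fin (m + 1) → Fin n) → ℝ) : (Fin m → Fin n) → ℝ :=
  fun J => ∑ j, τ j * g (Fin.cons j J)

theorem fopMat_vecMulVec_self (τ : Fin n → ℝ) {g : (Fin (m + 1) → Fin n) → ℝ} (hg : IsAlt g) :
    FopMat (vecMulVec τ τ) g = wedge1 τ (interiorProduct τ g) := by
  ext J
  refine Finset.sum_congr rfl fun a _ => ?_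
  conv_lhs => rw [← Fin.insertNth_self_removeNth a J]
  simp only [vecMulVec_apply, Fin.insertNth_apply_same, Fin.update_insertNth,
    hg.apply_insertNth, interiorProduct, Finset.mul_sum]
  exact Finset.sum_congr rfl fun i _ => by unfold Fin.removeNth; ring

theorem wedge1_dotProduct (τ : Fin n → ℝ) (ξ : (Fin m → Fin n) → ℝ)
    {g : (Fin (m + 1) → Fin n) → ℝ} (hg : IsAlt g) :
    wedge1 τ ξ ⬝ᵥ g = (m + 1) * (ξ ⬝ᵥ interiorProduct τ g) := by
  have slot (a : Fin (m + 1)) :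
      ∑ J, (-1) ^ (a : ℕ) * τ (J a) * ξ (fun b => J (a.succAbove b)) * g J
        = ξ ⬝ᵥ interiorProduct τ g := by
    have hsign : ((-1 : ℝ) ^ (a : ℕ)) * (-1) ^ (a : ℕ) = 1 := by rw [← mul_pow]; simp
    simp only [sum_insertNth a, Fin.insertNth_apply_same, Fin.insertNth_apply_succAbove,
      hg.apply_insertNth, dotProduct, interiorProduct, Finset.mul_sum]
    rw [Finset.sum_comm]
    refine Finset.sum_congr rfl fun J _ => Finset.sum_congr rfl fun j _ => ?_
    linear_combination (τ j * ξ J * g (Fin.cons j J)) * hsign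
  simp only [dotProduct, wedge1, Finset.sum_mul]
  rw [Finset.sum_comm]
  simp only [slot, Finset.sum_const, Finset.card_univ, Fintype.card_fin, nsmul_eq_mul]
  push_cast
  rfl

theorem swap_castSucc_succ_comp_succAbove_castSucc (c : Fin m) :
    Equiv.swap c.castSucc c.succ ∘ c.castSucc.succAbove = c.succ.succAbove := by
  ext b : 1
  rcases lt_trichotomy b c with h | rfl | h
  · rw [Function.comp_apply, Fin.succAbove_castSucc_of_lt _ _ h,
      Fin.succAbove_succ_of_le _ _ h.le,
      Equiv.swap_apply_of_ne_of_ne (by simpa using h.ne) (Fin.castSucc_lt_succ_iff.mpr h.le).ne]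
  · simp
  · rw [Function.comp_apply, Fin.succAbove_castSucc_of_le _ _ h.le,
      Fin.succAbove_succ_of_lt _ _ h,
      Equiv.swap_apply_of_ne_of_ne (Fin.castSucc_lt_succ_iff.mpr h.le).ne' (by simpa using h.ne')]

theorem swap_castSucc_succ_comp_succAbove_succ (c : Fin m) :
    Equiv.swap c.castSucc c.succ ∘ c.succ.succAbove = c.castSucc.succAbove := by
  rw [← swap_castSucc_succ_comp_succAbove_castSucc]
  ext b : 1
  simp

theorem wedge1_comp_swap_castSucc_succ (τ : Fin n → ℝ) {ξ : (Fin m → Fin n) → ℝ}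
    (hξ : IsAlt ξ) (J : Fin (m + 1) → Fin n) (c : Fin m) :
    wedge1 τ ξ (J ∘ Equiv.swap c.castSucc c.succ) = -wedge1 τ ξ J := by
  set s := Equiv.swap c.castSucc c.succ
  let term (a : Fin (m + 1)) : ℝ := (-1) ^ (a : ℕ) * τ (J a) * ξ (J ∘ a.succAbove)
  have hterm (a : Fin (m + 1)) :
      (-1) ^ (a : ℕ) * τ (J (s a)) * ξ (J ∘ s ∘ a.succAbove) = -term (s a) := by
    rcases eq_or_ne a c.castSucc with rfl | h1
    · simp [term, s, swap_castSucc_succ_comp_succAbove_castSucc, pow_succ]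
    rcases eq_or_ne a c.succ with rfl | h2
    · simp [term, s, swap_castSucc_succ_comp_succAbove_succ, pow_succ]
    -- `s` fixes `a` and swaps two adjacent entries of the remaining `m`-tuple.
    obtain ⟨b1, hb1⟩ := Fin.exists_succAbove_eq h1.symm
    obtain ⟨b2, hb2⟩ := Fin.exists_succAbove_eq h2.symm
    have hb : b1 ≠ b2 := fun h => (Fin.castSucc_lt_succ (i := c)).ne (by rw [← hb1, ← hb2, h])
    have hcomp : J ∘ s ∘ a.succAbove = (J ∘ a.succAbove) ∘ Equiv.swap b1 b2 := by
      ext b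
      simp [s, ← hb1, ← hb2, Fin.succAbove_right_injective.swap_apply]
    rw [hcomp, hξ, Equiv.Perm.sign_swap hb, Equiv.swap_apply_of_ne_of_ne h1 h2]
    simp only [term]
    push_cast
    ring
  calc wedge1 τ ξ (J ∘ s) = ∑ a, -term (s a) := Finset.sum_congr rfl fun a _ => hterm a
    _ = -wedge1 τ ξ J := by rw [Finset.sum_neg_distrib, Equiv.sum_comp s term]; rfl

theorem IsAlt.wedge1 (τ : Fin n → ℝ) {ξ : (Fin m → Fin n) → ℝ} (hξ : IsAlt ξ) :
    IsAlt (wedge1 τ ξ) :=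
  isAlt_of_comp_swap_castSucc_succ (wedge1_comp_swap_castSucc_succ τ hξ)

end Wedge

section TensorPower

variable {R : Type*} [CommSemiring R] {ι α β γ : Type*} [Fintype ι]

def tensorPowMatrix (ι : Type*) [Fintype ι] (P : Matrix α β R) : Matrix (ι → α) (ι → β) R :=
  of fun K J => ∏ b, P (K b) (J b)

theorem tensorPowMatrix_mul [DecidableEq ι] [Fintype β] (P : Matrix α β R) (Q : Matrix β γ R) :
    tensorPowMatrix ι (P * Q) = tensorPowMatrix ι P * tensorPowMatrix ι Q := by
  ext K J
  simp only [tensorPowMatrix, of_apply, mul_apply, ← Finset.prod_mul_distrib]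
  exact Finset.prod_univ_sum _ _ |>.trans (by simp)

theorem tensorPowMatrix_one [DecidableEq ι] [DecidableEq α] :
    tensorPowMatrix ι (1 : Matrix α α R) = 1 := by
  ext K J
  simp [tensorPowMatrix, one_apply, Finset.prod_boole, funext_iff]

theorem tensorPowMatrix_transpose (P : Matrix α β R) :
    (tensorPowMatrix ι P)ᵀ = tensorPowMatrix ι Pᵀ :=
  rfl

theorem tensorPowMatrix_transpose_mul_self [DecidableEq ι] [Fintype α] [DecidableEq β]
    {P : Matrix α β R} (hP : Pᵀ * P = 1) :
    (tensorPowMatrix ι P)ᵀ * tensorPowMatrix ι P = 1 := by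
  rw [tensorPowMatrix_transpose, ← tensorPowMatrix_mul, hP, tensorPowMatrix_one]

end TensorPower

theorem mulVec_dotProduct_mulVec_of_transpose_mul_self {R ι κ : Type*} [CommSemiring R]
    [Fintype ι] [Fintype κ] [DecidableEq κ] {M : Matrix ι κ R} (hM : Mᵀ * M = 1) (g h : κ → R) :
    (M *ᵥ g) ⬝ᵥ (M *ᵥ h) = g ⬝ᵥ h := by
  rw [dotProduct_mulVec, ← vecMul_transpose, vecMul_vecMul, hM, vecMul_one]

section Positivity

variable {n p : ℕ}

theorem IsAlt.tensorPowMatrix_mulVec (P : Matrix (Fin n) (Fin n) ℝ) {g : (Fin p → Fin n) → ℝ}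
    (hg : IsAlt g) : IsAlt (tensorPowMatrix (Fin p) P *ᵥ g) := by
  intro K σ
  simp only [mulVec, dotProduct, tensorPowMatrix, of_apply, Function.comp_apply, Finset.mul_sum]
  rw [← Fintype.sum_bijective _ σ.bijective.comp_right _ _ fun J => rfl]
  refine Finset.sum_congr rfl fun J _ => ?_
  simp only [Function.comp_apply, Equiv.prod_comp σ fun b => P (K b) (J b)]
  rw [hg]
  ring

theorem tensorPowMatrix_mulVec_fopMat {P η : Matrix (Fin n) (Fin n) ℝ} {lam : Fin n → ℝ}
    (hdiag : P * η = diagonal lam * P) (g : (Fin p → Fin n) → ℝ) (K : Fin p → Fin n) :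
    (tensorPowMatrix (Fin p) P *ᵥ FopMat η g) K
      = (∑ a, lam (K a)) * (tensorPowMatrix (Fin p) P *ᵥ g) K := by
  rcases p with _ | m
  · simp [FopMat, mulVec, dotProduct]
  have hrow (r i : Fin n) : ∑ j, P r j * η j i = lam r * P r i := by
    have := congrFun (congrFun hdiag r) i
    rwa [diagonal_mul, mul_apply] at this
  simp only [mulVec, dotProduct, tensorPowMatrix, of_apply, FopMat, Finset.mul_sum,
    Finset.sum_mul]
  rw [Finset.sum_comm]
  conv_rhs => rw [Finset.sum_comm]
  refine Finset.sum_congr rfl fun a _ => ?_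
  simp only [sum_insertNth a, Fin.prod_univ_succAbove _ a, Fin.insertNth_apply_same,
    Fin.insertNth_apply_succAbove, Fin.update_insertNth]
  rw [Finset.sum_comm]
  conv_rhs => rw [Finset.sum_comm]
  refine Finset.sum_congr rfl fun J _ => ?_
  rw [Finset.sum_comm]
  refine Finset.sum_congr rfl fun i _ => ?_
  calc _ = (∑ j, P (K a) j * η j i)
        * ((∏ c, P (K (a.succAbove c)) (J c)) * g (a.insertNth i J)) := by
        rw [Finset.sum_mul]
        exact Finset.sum_congr rfl fun j _ => by ring
    _ = _ := by rw [hrow]; ring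

theorem fopMat_dotProduct_self_nonneg_of_diag {P η : Matrix (Fin n) (Fin n) ℝ}
    {lam : Fin n → ℝ} (hP : Pᵀ * P = 1) (hdiag : P * η = diagonal lam * P)
    (hlam : ∀ K : Fin p → Fin n, Injective K → 0 ≤ ∑ a, lam (K a))
    {g : (Fin p → Fin n) → ℝ} (hg : IsAlt g) : 0 ≤ FopMat η g ⬝ᵥ g := by
  rw [← mulVec_dotProduct_mulVec_of_transpose_mul_self (tensorPowMatrix_transpose_mul_self hP)]
  refine Finset.sum_nonneg fun K _ => ?_
  rw [tensorPowMatrix_mulVec_fopMat hdiag, mul_assoc]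
  by_cases hK : Injective K
  · exact mul_nonneg (hlam K hK) (mul_self_nonneg _)
  · simp [(hg.tensorPowMatrix_mulVec P).apply_eq_zero_of_not_injective hK]

theorem Matrix.IsHermitian.fopMat_dotProduct_self_nonneg {η : Matrix (Fin n) (Fin n) ℝ}
    (hη : η.IsHermitian)
    (hpsd : ∀ s : Finset (Fin n), s.card = p → 0 ≤ ∑ i ∈ s, hη.eigenvalues i)
    {g : (Fin p → Fin n) → ℝ} (hg : IsAlt g) : 0 ≤ FopMat η g ⬝ᵥ g := by
  set U : Matrix (Fin n) (Fin n) ℝ := (hη.eigenvectorUnitary : Matrix (Fin n) (Fin n) ℝ)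
  have hU : U * star U = 1 := Unitary.coe_mul_star_self _
  have hdiag : star U * η * U = diagonal hη.eigenvalues := by
    simpa [Unitary.conjStarAlgAut_star_apply] using hη.conjStarAlgAut_star_eigenvectorUnitary
  refine fopMat_dotProduct_self_nonneg_of_diag (P := star U) (lam := hη.eigenvalues) ?_ ?_
    (fun K hK => ?_) hg
  · simpa [star_eq_conjTranspose, conjTranspose_eq_transpose_of_trivial] using hU
  · rw [← hdiag, Matrix.mul_assoc _ U, hU, Matrix.mul_one]
  · have := hpsd (univ.image K) (by rw [card_image_of_injective _ hK, card_univ, Fintype.card_fin])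
    rwa [sum_image hK.injOn] at this

theorem interiorProduct_eq_zero_of_fopMat_eq_zero {m : ℕ} {θ : Matrix (Fin n) (Fin n) ℝ}
    {τ : Fin n → ℝ} (hH : (θ - vecMulVec τ τ).IsHermitian)
    (hpsd : ∀ s : Finset (Fin n), s.card = m + 1 → 0 ≤ ∑ i ∈ s, hH.eigenvalues i)
    {g : (Fin (m + 1) → Fin n) → ℝ} (hg : IsAlt g) (hFg : FopMat θ g = 0) :
    interiorProduct τ g = 0 := by
  have hsplit : FopMat θ g ⬝ᵥ g = FopMat (θ - vecMulVec τ τ) g ⬝ᵥ g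
      + (m + 1) * (interiorProduct τ g ⬝ᵥ interiorProduct τ g) := by
    rw [← wedge1_dotProduct τ _ hg, ← fopMat_vecMulVec_self τ hg, ← add_dotProduct,
      ← fopMat_add_left, sub_add_cancel]
  rw [hFg, zero_dotProduct] at hsplit
  have h1 := hH.fopMat_dotProduct_self_nonneg hpsd hg
  have h2 : 0 ≤ interiorProduct τ g ⬝ᵥ interiorProduct τ g :=
    Finset.sum_nonneg fun _ _ => mul_self_nonneg _
  exact dotProduct_self_eq_zero.mp (by nlinarith)

end Positivity

theorem LinearMap.IsSymmetric.mem_range_of_forall_ker {𝕜 E : Type*} [RCLike 𝕜]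
    [NormedAddCommGroup E] [InnerProductSpace 𝕜 E] [FiniteDimensional 𝕜 E] {T : E →ₗ[𝕜] E}
    (hT : T.IsSymmetric) {x : E} (hx : ∀ y, T y = 0 → inner 𝕜 y x = 0) : x ∈ range T := by
  rw [← Submodule.orthogonal_orthogonal (range T), hT.orthogonal_range]
  exact fun y hy => hx y hy

theorem exists_mem_apply_eq_of_ker_dotProduct_eq_zero {ι : Type*} [Fintype ι]
    {W : Submodule ℝ (ι → ℝ)} {F : (ι → ℝ) →ₗ[ℝ] ι → ℝ} (hFW : ∀ g ∈ W, F g ∈ W)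
    (hF : ∀ g h, F g ⬝ᵥ h = g ⬝ᵥ F h) {x : ι → ℝ} (hx : x ∈ W)
    (hker : ∀ g ∈ W, F g = 0 → g ⬝ᵥ x = 0) : ∃ g ∈ W, F g = x := by
  -- Transport to `EuclideanSpace`, whose inner product is the dot product.
  let e := WithLp.linearEquiv 2 ℝ (ι → ℝ)
  let V := W.comap e.toLinearMap
  let T : V →ₗ[ℝ] V := (e.symm.toLinearMap ∘ₗ F ∘ₗ e.toLinearMap).restrict fun g hg => by
    simpa [V] using hFW _ hg
  have hT : T.IsSymmetric := fun a b => by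
    simp [T, e, EuclideanSpace.inner_eq_star_dotProduct, hF]
  obtain ⟨g, hg⟩ := hT.mem_range_of_forall_ker (x := ⟨WithLp.toLp 2 x, hx⟩) fun g hg => by
    have hFg : F (e g) = 0 := by simpa [T, e] using congrArg (fun v : V => e v) hg
    simpa [e, EuclideanSpace.inner_eq_star_dotProduct, dotProduct_comm] using hker _ g.2 hFg
  exact ⟨e g, g.2, congrArg (fun v : V => e v) hg⟩

/-- If the quadratic form `θ − τ ⊗ τ` is `p`-positive semi-definite (every sum of
`p = m+1` of its eigenvalues is nonnegative), then for every `(p−1)`-form `ξ` the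
`p`-form `τ ∧ ξ` lies in the image of `F_θ` (acting on alternating `p`-forms). -/
theorem stmt5 (n m : ℕ) (θ : Matrix (Fin n) (Fin n) ℝ) (hθ : θ.IsSymm)
    (τ : Fin n → ℝ)
    (hH : (θ - Matrix.vecMulVec τ τ).IsHermitian)
    (hpsd : ∀ s : Finset (Fin n), s.card = m + 1 → 0 ≤ ∑ i ∈ s, hH.eigenvalues i)
    (ξ : (Fin m → Fin n) → ℝ) (hξ : IsAlt ξ) :
    ∃ g : (Fin (m + 1) → Fin n) → ℝ, IsAlt g ∧ FopMat θ g = wedge1 τ ξ := by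
  obtain ⟨g, hg, hFg⟩ := exists_mem_apply_eq_of_ker_dotProduct_eq_zero
    (W := altSubmodule n (m + 1)) (F := fopMatₗ θ) (fun g hg => IsAlt.fopMat θ hg)
    (fopMat_dotProduct_comm hθ) (IsAlt.wedge1 τ hξ) fun g hg hFg => by
      rw [dotProduct_comm, wedge1_dotProduct τ ξ hg,
        interiorProduct_eq_zero_of_fopMat_eq_zero hH hpsd hg hFg, dotProduct_zero, mul_zero]
  exact ⟨g, hg, hFg⟩
end

section
/- Let V be an n-dimensional real inner product space and θ a positive definite quadratic form on V (so all eigenvalues λ_1 ≤ ... ≤ λ_n of its matrix are positive). Then for every p-form g = Σ_J g_J ω^J one has ⟨F_θ^{-1} g, g⟩ ≤ p^{-2} Σ_{j,k} Σ_K θ^{jk} g_{jK} g_{kK}, where (θ^{jk}) is the inverse matrix of (θ_{jk}) and K runs over strictly increasing multi-indices of length p−1. -/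
/-!
Write `v_K = u(·, K)` and `w_K = g(·, K)` for the slices of `u` and `g` along the first slot.
Since `u` is alternating, each of the `p + 1` slots of `F_θ` contributes the same amount to
`Σ_J u_J g_J`, which is therefore `(p + 1) Σ_K ⟨θ v_K, v_K⟩`; it is also `Σ_K ⟨v_K, w_K⟩`.
Completing the square gives `2⟨x, w⟩ - ⟨θ x, x⟩ ≤ ⟨θ⁻¹ w, w⟩`, and taking `x = (p + 1) v_K` yields
`(p + 1)² Σ_K ⟨θ v_K, v_K⟩ ≤ Σ_K ⟨θ⁻¹ w_K, w_K⟩`.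
-/

open Finset Matrix

/-- Inner product of `p`-forms (increasing-multi-index basis orthonormal). -/
noncomputable def innerF {n p : ℕ} (f g : (Fin p → Fin n) → ℝ) : ℝ :=
  ((Nat.factorial p : ℝ))⁻¹ * ∑ J : Fin p → Fin n, f J * g J

theorem Matrix.PosDef.two_mul_dotProduct_sub_le {n : Type*} [Fintype n] [DecidableEq n]
    {θ : Matrix n n ℝ} (hθ : θ.PosDef) (x w : n → ℝ) :
    2 * (x ⬝ᵥ w) - x ⬝ᵥ θ *ᵥ x ≤ w ⬝ᵥ θ⁻¹ *ᵥ w := by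
  set a := θ⁻¹ *ᵥ w
  have hθa : θ *ᵥ a = w := by
    rw [mulVec_mulVec, mul_nonsing_inv _ ((isUnit_iff_isUnit_det θ).mp hθ.isUnit), one_mulVec]
  have hsymm : a ⬝ᵥ θ *ᵥ x = x ⬝ᵥ w := by
    rw [dotProduct_mulVec, ← mulVec_transpose, ← conjTranspose_eq_transpose_of_trivial,
      hθ.isHermitian.eq, hθa, dotProduct_comm]
  -- `0 ≤ ⟨θ (x - a), x - a⟩` expands to the claim
  have hsq := hθ.posSemidef.dotProduct_mulVec_nonneg (x - a)
  simp only [star_trivial, mulVec_sub, hθa, sub_dotProduct, dotProduct_sub, hsymm] at hsq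
  rw [dotProduct_comm a w] at hsq
  linarith

theorem Matrix.PosDef.sq_mul_sum_le_of_sum_dotProduct_eq {ι n : Type*} [Fintype ι] [Fintype n]
    [DecidableEq n] {θ : Matrix n n ℝ} (hθ : θ.PosDef) {v w : ι → n → ℝ} {c : ℝ}
    (h : ∑ K, v K ⬝ᵥ w K = c * ∑ K, v K ⬝ᵥ θ *ᵥ v K) :
    c ^ 2 * ∑ K, v K ⬝ᵥ θ *ᵥ v K ≤ ∑ K, w K ⬝ᵥ θ⁻¹ *ᵥ w K := by
  have hsum := sum_le_sum fun K (_ : K ∈ univ) => hθ.two_mul_dotProduct_sub_le (c • v K) (w K)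
  simp only [smul_dotProduct, dotProduct_smul, mulVec_smul, smul_eq_mul, sum_sub_distrib,
    ← mul_sum, h] at hsum
  linarith

theorem Fin.sum_pi_succ {α M : Type*} [Fintype α] [AddCommMonoid M] {p : ℕ}
    (f : (Fin (p + 1) → α) → M) :
    ∑ J, f J = ∑ j : α, ∑ K : Fin p → α, f (Fin.cons j K) := by
  rw [← (Fin.consEquiv fun _ => α).sum_comp, Fintype.sum_prod_type]
  rfl

theorem IsAlt.sum_mul_slot_eq {n p : ℕ} {u : (Fin p → Fin n) → ℝ} (hu : IsAlt u)
    (θ : Matrix (Fin n) (Fin n) ℝ) (a b : Fin p) :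
    ∑ J, u J * ∑ i, θ (J a) i * u (Function.update J a i)
      = ∑ J, u J * ∑ i, θ (J b) i * u (Function.update J b i) := by
  set σ := Equiv.swap a b
  have hsign : ((Equiv.Perm.sign σ : ℤ) : ℝ) * (Equiv.Perm.sign σ : ℤ) = 1 := by
    rw [← Int.cast_mul, ← Units.val_mul, Int.units_mul_self, Units.val_one, Int.cast_one]
  calc ∑ J, u J * ∑ i, θ (J a) i * u (Function.update J a i)
      = ∑ J, u (J ∘ σ) * ∑ i, θ ((J ∘ σ) b) i * u (Function.update (J ∘ σ) b i) := by
        refine sum_congr rfl fun J _ => ?_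
        have hupdate : ∀ i, Function.update (J ∘ σ) b i = Function.update J a i ∘ σ := fun i => by
          rw [Function.update_comp_equiv, Equiv.symm_swap, Equiv.swap_apply_left]
        simp only [hupdate, hu _ σ, Function.comp_apply, Equiv.swap_apply_right, σ, mul_sum]
        refine sum_congr rfl fun i _ => ?_
        linear_combination (-(u J * (θ (J a) i * u (Function.update J a i)))) * hsign
    _ = ∑ J, u J * ∑ i, θ (J b) i * u (Function.update J b i) :=
        Fintype.sum_equiv (Equiv.arrowCongr σ.symm (Equiv.refl _)) _ _ fun _ => rfl

theorem IsAlt.sum_mul_FopMat {n p : ℕ} {u : (Fin (p + 1) → Fin n) → ℝ} (hu : IsAlt u)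
    (θ : Matrix (Fin n) (Fin n) ℝ) :
    ∑ J, u J * FopMat θ u J
      = (p + 1) * ∑ K : Fin p → Fin n,
          (fun j => u (Fin.cons j K)) ⬝ᵥ θ *ᵥ fun j => u (Fin.cons j K) := by
  calc ∑ J, u J * FopMat θ u J
      = ∑ b : Fin (p + 1), ∑ J, u J * ∑ i, θ (J b) i * u (Function.update J b i) := by
        simp only [FopMat, mul_sum]
        exact sum_comm
    _ = (p + 1) * ∑ J, u J * ∑ i, θ (J 0) i * u (Function.update J 0 i) := by
        simp only [hu.sum_mul_slot_eq θ _ 0, sum_const, card_univ, Fintype.card_fin, nsmul_eq_mul,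
          Nat.cast_succ]
    _ = _ := by
        rw [Fin.sum_pi_succ, sum_comm]
        simp only [Fin.cons_zero, Fin.update_cons_zero, dotProduct, mulVec, mul_sum]

theorem stmt8_general (n p : ℕ) (θ : Matrix (Fin n) (Fin n) ℝ) (hθ : θ.PosDef)
    (g : (Fin (p + 1) → Fin n) → ℝ)
    (u : (Fin (p + 1) → Fin n) → ℝ) (hu : IsAlt u) (hFu : FopMat θ u = g) :
    innerF u g
      ≤ (((p : ℝ) + 1) ^ 2)⁻¹ * (((Nat.factorial p : ℝ))⁻¹ *
          ∑ j : Fin n, ∑ k : Fin n, ∑ K : Fin p → Fin n,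
            θ⁻¹ j k * (g (Fin.cons j K) * g (Fin.cons k K))) := by
  set v : (Fin p → Fin n) → Fin n → ℝ := fun K j => u (Fin.cons j K)
  set w : (Fin p → Fin n) → Fin n → ℝ := fun K j => g (Fin.cons j K)
  have hquad : ∑ J, u J * g J = (p + 1) * ∑ K, v K ⬝ᵥ θ *ᵥ v K := hFu ▸ hu.sum_mul_FopMat θ
  have hpair : ∑ K, v K ⬝ᵥ w K = ∑ J, u J * g J := by
    rw [Fin.sum_pi_succ, sum_comm]
    rfl
  have hrhs : ∑ K, w K ⬝ᵥ θ⁻¹ *ᵥ w K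
      = ∑ j, ∑ k, ∑ K, θ⁻¹ j k * (g (Fin.cons j K) * g (Fin.cons k K)) := by
    simp only [dotProduct, mulVec, mul_sum]
    rw [sum_comm]
    refine sum_congr rfl fun j _ => ?_
    rw [sum_comm]
    exact sum_congr rfl fun k _ => sum_congr rfl fun K _ => by ring
  have hkey := hθ.sq_mul_sum_le_of_sum_dotProduct_eq (hpair.trans hquad)
  rw [hrhs] at hkey
  rw [innerF, hquad, Nat.factorial_succ]
  generalize ∑ K, v K ⬝ᵥ θ *ᵥ v K = S₁ at hkey ⊢
  generalize ∑ j, ∑ k, ∑ K, θ⁻¹ j k * (g (Fin.cons j K) * g (Fin.cons k K)) = S₂ at hkey ⊢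
  calc ((((p + 1) * p.factorial : ℕ) : ℝ))⁻¹ * ((p + 1) * S₁) = (p.factorial : ℝ)⁻¹ * S₁ := by
        push_cast
        field_simp
    _ ≤ (p.factorial : ℝ)⁻¹ * ((((p : ℝ) + 1) ^ 2)⁻¹ * S₂) := by
        gcongr
        rwa [le_inv_mul_iff₀ (by positivity)]
    _ = _ := by ring

/-- For a positive definite quadratic form `θ` and a form `g` of degree `p+1`,
`⟨F_θ⁻¹ g, g⟩ ≤ (p+1)⁻² Σ_{j,k,K} θ^{jk} g_{jK} g_{kK}`, where `u = F_θ⁻¹ g`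
(i.e. `F_θ u = g`) and `(θ^{jk})` is the inverse matrix of `(θ_{jk})`.
(`K` runs over multi-indices of length one less than the degree.) -/
theorem stmt8 (n p : ℕ) (θ : Matrix (Fin n) (Fin n) ℝ) (hθ : θ.PosDef)
    (g : (Fin (p + 1) → Fin n) → ℝ) (hg : IsAlt g)
    (u : (Fin (p + 1) → Fin n) → ℝ) (hu : IsAlt u) (hFu : FopMat θ u = g) :
    innerF u g
      ≤ (((p : ℝ) + 1) ^ 2)⁻¹ * (((Nat.factorial p : ℝ))⁻¹ *
          ∑ j : Fin n, ∑ k : Fin n, ∑ K : Fin p → Fin n,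
            θ⁻¹ j k * (g (Fin.cons j K) * g (Fin.cons k K))) :=
  stmt8_general n p θ hθ g u hu hFu
end

section
/- Let ψ(x) = p|x|²/(2D²) on the ball of radius D centered at the origin in ℝ^n, where 1 ≤ p ≤ n. Then the function −e^{−ψ} is p-plurisubharmonic on that ball, i.e., at each point x with |x| ≤ D, every sum of p eigenvalues of the Hessian matrix of −e^{−ψ} is nonnegative. -/
noncomputable def HessMat {n : ℕ} (f : EuclideanSpace ℝ (Fin n) → ℝ)
    (x : EuclideanSpace ℝ (Fin n)) : Matrix (Fin n) (Fin n) ℝ :=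
  fun i j => fderiv ℝ (fun y => fderiv ℝ f y (EuclideanSpace.single j 1)) x
    (EuclideanSpace.single i 1)

/-!
The function is radial, `u y = g ‖y‖²` with `g r = -exp (-a r)` and `a = p / (2 D²)`, so its
Hessian is `2 g' I + 4 g'' x xᵀ = 2a e (I - 2a x xᵀ)` with `e = exp (-a ‖x‖²)`. The eigenvalue of a
unit eigenvector `v` is then `2a e (1 - 2a ⟪v, x⟫²)`, and by Bessel's inequality any `p` of them,
belonging to orthonormal eigenvectors, sum to at least `2a e (p - 2a ‖x‖²) = (p/D²) e (p - p ‖x‖²/D²)`,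
which is nonnegative as soon as `‖x‖ ≤ D`.
-/

open Matrix Finset

section Radial

variable {n : ℕ} {g g' : ℝ → ℝ}

lemma hasFDerivAt_comp_norm_sq {c : ℝ} {y : EuclideanSpace ℝ (Fin n)}
    (hg : HasDerivAt g c (‖y‖ ^ 2)) :
    HasFDerivAt (fun y : EuclideanSpace ℝ (Fin n) => g (‖y‖ ^ 2)) (c • 2 • innerSL ℝ y) y :=
  hg.comp_hasFDerivAt y (hasStrictFDerivAt_norm_sq y).hasFDerivAt

lemma fderiv_comp_norm_sq_single (hg : ∀ r, HasDerivAt g (g' r) r)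
    (y : EuclideanSpace ℝ (Fin n)) (j : Fin n) :
    fderiv ℝ (fun y : EuclideanSpace ℝ (Fin n) => g (‖y‖ ^ 2)) y (EuclideanSpace.single j 1) =
      2 * g' (‖y‖ ^ 2) * y j := by
  simp only [(hasFDerivAt_comp_norm_sq (hg _)).fderiv, _root_.smul_apply,
    coe_innerSL_apply, EuclideanSpace.inner_single_right, Real.ringHom_apply, one_mul,
    nsmul_eq_mul, Nat.cast_ofNat, smul_eq_mul]
  ring

lemma hessMat_comp_norm_sq {g'' : ℝ} (hg : ∀ r, HasDerivAt g (g' r) r)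
    (x : EuclideanSpace ℝ (Fin n)) (hg' : HasDerivAt g' g'' (‖x‖ ^ 2)) :
    HessMat (fun y => g (‖y‖ ^ 2)) x =
      (2 * g' (‖x‖ ^ 2)) • 1 + (4 * g'') • vecMulVec ⇑x ⇑x := by
  ext i j
  have hpartial : HasFDerivAt (fun y : EuclideanSpace ℝ (Fin n) => 2 * g' (‖y‖ ^ 2) * y j)
      ((2 * g' (‖x‖ ^ 2)) • EuclideanSpace.proj j + x j • (2 : ℝ) • g'' • 2 • innerSL ℝ x) x :=
    ((hasFDerivAt_comp_norm_sq hg').const_mul 2).mul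
      ((EuclideanSpace.proj (𝕜 := ℝ) j).hasFDerivAt (x := x))
  simp only [HessMat, fderiv_comp_norm_sq_single hg, hpartial.fderiv,
    _root_.add_apply, _root_.smul_apply, PiLp.proj_apply,
    PiLp.single_apply, smul_eq_mul, mul_ite, mul_one, mul_zero, coe_innerSL_apply,
    EuclideanSpace.inner_single_right, Real.ringHom_apply, one_mul, nsmul_eq_mul, Nat.cast_ofNat,
    Matrix.add_apply, Matrix.smul_apply, one_apply, vecMulVec_apply, @eq_comm _ j i]
  ring

end Radial

section SumEigenvalues

variable {ι : Type*} [Fintype ι] [DecidableEq ι]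

lemma dotProduct_smul_one_add_smul_vecMulVec_mulVec (α β : ℝ) (x v : ι → ℝ) :
    v ⬝ᵥ ((α • 1 + β • vecMulVec x x) *ᵥ v) = α * (v ⬝ᵥ v) + β * (x ⬝ᵥ v) ^ 2 := by
  simp only [add_mulVec, smul_mulVec, one_mulVec, vecMulVec_mulVec, dotProduct_add,
    dotProduct_smul, smul_eq_mul, op_smul_eq_mul, dotProduct_comm v x]
  ring

lemma Matrix.IsHermitian.eigenvalues_eq_of_eq_smul_one_add_smul_vecMulVec {A : Matrix ι ι ℝ}
    (hA : A.IsHermitian) {α β : ℝ} {x : EuclideanSpace ℝ ι}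
    (h : A = α • 1 + β • vecMulVec ⇑x ⇑x) (i : ι) :
    hA.eigenvalues i = α + β * inner ℝ (hA.eigenvectorBasis i) x ^ 2 := by
  rw [hA.eigenvalues_eq, show A *ᵥ _ = _ from congrArg (· *ᵥ _) h]
  simp only [star_trivial, RCLike.re_to_real, dotProduct_smul_one_add_smul_vecMulVec_mulVec]
  have hunit : inner ℝ (hA.eigenvectorBasis i) (hA.eigenvectorBasis i) = (1 : ℝ) := by
    rw [real_inner_self_eq_norm_sq, hA.eigenvectorBasis.orthonormal.1 i, one_pow]
  rw [EuclideanSpace.inner_eq_star_dotProduct, star_trivial] at hunit ⊢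
  rw [hunit, mul_one]

lemma Matrix.IsHermitian.le_sum_eigenvalues_of_eq_smul_one_add_smul_vecMulVec
    {A : Matrix ι ι ℝ} (hA : A.IsHermitian) {α β : ℝ} (hβ : β ≤ 0) {x : EuclideanSpace ℝ ι}
    (h : A = α • 1 + β • vecMulVec ⇑x ⇑x) (s : Finset ι) :
    α * #s + β * ‖x‖ ^ 2 ≤ ∑ i ∈ s, hA.eigenvalues i := by
  have bessel := hA.eigenvectorBasis.orthonormal.sum_inner_products_le x (s := s)
  simp only [hA.eigenvalues_eq_of_eq_smul_one_add_smul_vecMulVec h, sum_add_distrib, sum_const,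
    nsmul_eq_mul, ← mul_sum, Real.norm_eq_abs, sq_abs] at bessel ⊢
  nlinarith

end SumEigenvalues

open Real

lemma hessMat_neg_exp_neg_mul_norm_sq {n : ℕ} (a : ℝ) (x : EuclideanSpace ℝ (Fin n)) :
    HessMat (fun y => -exp (-(a * ‖y‖ ^ 2))) x =
      (2 * a * exp (-(a * ‖x‖ ^ 2))) • 1 +
        (-(4 * a ^ 2 * exp (-(a * ‖x‖ ^ 2)))) • vecMulVec ⇑x ⇑x := by
  have hg (r : ℝ) : HasDerivAt (fun r => -exp (-(a * r))) (a * exp (-(a * r))) r := by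
    exact ((hasDerivAt_id' r).const_mul a).fun_neg.exp.neg.congr_deriv (by ring)
  have hg' (r : ℝ) : HasDerivAt (fun r => a * exp (-(a * r))) (-(a ^ 2 * exp (-(a * r)))) r :=
    (((hasDerivAt_id' r).const_mul a).fun_neg.exp.const_mul a).congr_deriv (by ring)
  rw [hessMat_comp_norm_sq hg x (hg' _)]
  ring_nf

theorem stmt9_general (n p : ℕ) (D : ℝ)
    (x : EuclideanSpace ℝ (Fin n)) (hx : ‖x‖ ≤ D)
    (hH : (HessMat (fun y : EuclideanSpace ℝ (Fin n) =>
        -Real.exp (-((p : ℝ) * ‖y‖ ^ 2 / (2 * D ^ 2)))) x).IsHermitian)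
    (s : Finset (Fin n)) (hs : s.card = p) :
    0 ≤ ∑ i ∈ s, hH.eigenvalues i := by
  have hHess := hessMat_neg_exp_neg_mul_norm_sq ((p : ℝ) / (2 * D ^ 2)) x
  simp only [← mul_div_right_comm] at hHess
  have hxD : (p : ℝ) * ‖x‖ ^ 2 / D ^ 2 ≤ p :=
    div_le_of_le_mul₀ (by positivity) p.cast_nonneg
      (mul_le_mul_of_nonneg_left (pow_le_pow_left₀ (norm_nonneg x) hx 2) p.cast_nonneg)
  refine (hH.le_sum_eigenvalues_of_eq_smul_one_add_smul_vecMulVec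
    (neg_nonpos.2 (by positivity)) hHess s).trans' ?_
  rw [hs]
  calc 0 ≤ p / D ^ 2 * exp (-(p * ‖x‖ ^ 2 / (2 * D ^ 2))) * (p - p * ‖x‖ ^ 2 / D ^ 2) :=
        mul_nonneg (by positivity) (sub_nonneg.2 hxD)
    _ = _ := by ring

/-- Let `ψ(x) = p|x|²/(2D²)`.  Then `−e^{−ψ}` is `p`-plurisubharmonic on the closed
ball of radius `D`: at each point `x` with `|x| ≤ D`, every sum of `p` eigenvalues
of the Hessian matrix of `−e^{−ψ}` is nonnegative. -/
theorem stmt9 (n p : ℕ) (hp1 : 1 ≤ p) (hpn : p ≤ n) (D : ℝ) (hD : 0 < D)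
    (x : EuclideanSpace ℝ (Fin n)) (hx : ‖x‖ ≤ D)
    (hH : (HessMat (fun y : EuclideanSpace ℝ (Fin n) =>
        -Real.exp (-((p : ℝ) * ‖y‖ ^ 2 / (2 * D ^ 2)))) x).IsHermitian)
    (s : Finset (Fin n)) (hs : s.card = p) :
    0 ≤ ∑ i ∈ s, hH.eigenvalues i :=
  stmt9_general n p D x hx hH s hs
end

section
/- Let 𝔯 be the curvature operator of an oriented Riemannian n-manifold at a point, acting as a self-adjoint operator on 2-forms, and let λ_𝔯 and Λ_𝔯 be its smallest and largest eigenvalues. For a p-form g with antisymmetric coefficients g_{i_1...i_p} in an orthonormal coframe, define for each strictly increasing multi-index (i_1 < ... < i_p) the 2-form ξ^g_{i_1...i_p} = Σ_{a=1}^p Σ_{i=1}^n g_{i_1...(i)_a...i_p} ω^i ∧ ω^{i_a} (replacing the a-th index by i). Then p(n−p) λ_𝔯 |g|² ≤ Σ_{i_1<...<i_p} ⟨𝔯 ξ^g_{i_1...i_p}, ξ^g_{i_1...i_p}⟩ ≤ p(n−p) Λ_𝔯 |g|². -/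
/-- `2`-forms on `ℝⁿ` represented by antisymmetric matrices. -/
def IsAntisym {n : ℕ} (A : Matrix (Fin n) (Fin n) ℝ) : Prop := Matrix.transpose A = -A

/-- Inner product of `2`-forms in the antisymmetric-matrix representation. -/
noncomputable def inner2 {n : ℕ} (A B : Matrix (Fin n) (Fin n) ℝ) : ℝ :=
  (2 : ℝ)⁻¹ * ∑ i : Fin n, ∑ j : Fin n, A i j * B i j

/-- The coefficient matrix of the 2-form
`ξ^g_{i_1…i_p} = Σ_{a,i} g_{i_1…(i)_a…i_p} ω^i ∧ ω^{i_a}` attached to a `p`-form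
`g` and a multi-index `J = (i_1,…,i_p)`. -/
def xiForm {n p : ℕ} (g : (Fin p → Fin n) → ℝ) (J : Fin p → Fin n) :
    Matrix (Fin n) (Fin n) ℝ :=
  fun i j =>
    (∑ a : Fin p, if j = J a then g (Function.update J a i) else 0)
      - ∑ a : Fin p, if i = J a then g (Function.update J a j) else 0

lemma g_zero {n p : ℕ} {g : (Fin p → Fin n) → ℝ} (hg : IsAlt g)
    {J : Fin p → Fin n} {a b : Fin p} (hab : a ≠ b) (h : J a = J b) : g J = 0 := by
  have hJ : J ∘ (Equiv.swap a b : Equiv.Perm (Fin p)) = J := by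
    funext x
    simp only [Function.comp_apply, Equiv.swap_apply_def]
    split_ifs with h1 h2
    · rw [h1, h]
    · rw [h2, h]
    · rfl
  have := hg J (Equiv.swap a b)
  rw [hJ, Equiv.Perm.sign_swap hab] at this
  push_cast at this
  linarith

noncomputable def ea {n p : ℕ} (a : Fin p) :
    ((Fin p → Fin n) × Fin n) ≃ ((Fin p → Fin n) × Fin n) :=
  Function.Involutive.toPerm (fun x => (Function.update x.1 a x.2, x.1 a))
    (by
      rintro ⟨J, i⟩
      simp [Function.update_eq_self])

lemma reindex {n p : ℕ} (a : Fin p) (F : (Fin p → Fin n) → Fin n → Fin n → ℝ) :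
    ∑ J : Fin p → Fin n, ∑ i : Fin n, F (Function.update J a i) i (J a)
      = ∑ K : Fin p → Fin n, ∑ v : Fin n, F K (K a) v := by
  have h1 : ∑ J : Fin p → Fin n, ∑ i : Fin n, F (Function.update J a i) i (J a)
      = ∑ x : (Fin p → Fin n) × Fin n, F (Function.update x.1 a x.2) x.2 (x.1 a) :=
    (Fintype.sum_prod_type (f := fun x => F (Function.update x.1 a x.2) x.2 (x.1 a))).symm
  have h2 : ∑ K : Fin p → Fin n, ∑ v : Fin n, F K (K a) v
      = ∑ x : (Fin p → Fin n) × Fin n, F x.1 (x.1 a) x.2 :=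
    (Fintype.sum_prod_type (f := fun x => F x.1 (x.1 a) x.2)).symm
  rw [h1, h2, ← Equiv.sum_comp (ea (n := n) a) (fun x => F x.1 (x.1 a) x.2)]
  apply Fintype.sum_congr
  rintro ⟨J, i⟩
  simp [ea, Function.Involutive.toPerm]

def Tm {n p : ℕ} (g : (Fin p → Fin n) → ℝ) (J : Fin p → Fin n) (i j : Fin n) : ℝ :=
  ∑ a : Fin p, if j = J a then g (Function.update J a i) else 0

lemma sum_ite_prod {n : ℕ} (c d : Fin n) (x y : ℝ) :
    ∑ j : Fin n, (if j = c then x else 0) * (if j = d then y else 0)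
      = if c = d then x * y else 0 := by
  have h : ∀ j : Fin n, (if j = c then x else 0) * (if j = d then y else 0)
      = if j = c then (if c = d then x * y else 0) else 0 := by
    intro j
    rcases eq_or_ne j c with h1 | h1 <;> rcases eq_or_ne j d with h2 | h2 <;>
      subst_vars <;> simp_all
  rw [Finset.sum_congr rfl fun j _ => h j, Finset.sum_ite_eq' Finset.univ c]
  simp

lemma sum_ite_pick {n : ℕ} (c : Fin n) (f : Fin n → ℝ) :
    ∑ j : Fin n, (if j = c then f j else 0) = f c := by
  rw [Finset.sum_ite_eq' Finset.univ c f]; simp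

lemma g_swap {n p : ℕ} {g : (Fin p → Fin n) → ℝ} (hg : IsAlt g)
    {J : Fin p → Fin n} {a b : Fin p} (hab : a ≠ b) (h : J a = J b) (i : Fin n) :
    g (Function.update J b i) = - g (Function.update J a i) := by
  have hcomp : Function.update J b i = (Function.update J a i) ∘ (Equiv.swap a b : Equiv.Perm (Fin p)) := by
    funext x
    simp only [Function.comp_apply]
    rcases eq_or_ne x a with rfl | hxa
    · rw [Equiv.swap_apply_left, Function.update_of_ne hab, Function.update_of_ne hab.symm, h]
    · rcases eq_or_ne x b with rfl | hxb
      · rw [Equiv.swap_apply_right, Function.update_self, Function.update_self]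
      · rw [Equiv.swap_apply_of_ne_of_ne hxa hxb, Function.update_of_ne hxb,
          Function.update_of_ne hxa]
  rw [hcomp, hg _ (Equiv.swap a b), Equiv.Perm.sign_swap hab]
  push_cast
  ring

lemma sumT2 {n p : ℕ} {g : (Fin p → Fin n) → ℝ} (hg : IsAlt g) :
    ∑ J : Fin p → Fin n, ∑ i : Fin n, ∑ j : Fin n, (Tm g J i j) ^ 2
      = ((p * n : ℕ) : ℝ) * (∑ J, g J ^ 2) - ((p * (p - 1) : ℕ) : ℝ) * (∑ J, g J ^ 2) := by
  have step1 : ∀ (J : Fin p → Fin n) (i : Fin n),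
      ∑ j : Fin n, (Tm g J i j) ^ 2
        = ∑ a : Fin p, ∑ b : Fin p,
            (if J a = J b then g (Function.update J a i) * g (Function.update J b i) else 0) := by
    intro J i
    have h0 : ∀ j : Fin n, (Tm g J i j) ^ 2
        = ∑ a : Fin p, ∑ b : Fin p,
            (if j = J a then g (Function.update J a i) else 0)
              * (if j = J b then g (Function.update J b i) else 0) := by
      intro j
      rw [sq, Tm, Finset.sum_mul_sum]
    rw [Finset.sum_congr rfl fun j _ => h0 j]
    rw [Finset.sum_comm]
    refine Finset.sum_congr rfl fun a _ => ?_
    rw [Finset.sum_comm]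
    exact Finset.sum_congr rfl fun b _ => sum_ite_prod _ _ _ _
  have step2 : ∀ (J : Fin p → Fin n) (i : Fin n),
      ∑ a : Fin p, ∑ b : Fin p,
          (if J a = J b then g (Function.update J a i) * g (Function.update J b i) else 0)
        = (∑ a : Fin p, g (Function.update J a i) ^ 2)
            + ∑ a : Fin p, ∑ b ∈ Finset.univ.erase a,
                (if J a = J b then - g (Function.update J a i) ^ 2 else 0) := by
    intro J i
    rw [← Finset.sum_add_distrib]
    refine Finset.sum_congr rfl fun a _ => ?_
    rw [← Finset.sum_erase_add _ _ (Finset.mem_univ a)]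
    rw [if_pos rfl, ← sq, add_comm]
    congr 1
    refine Finset.sum_congr rfl fun b hb => ?_
    have hab : a ≠ b := fun h => (Finset.mem_erase.1 hb).1 h.symm
    by_cases h : J a = J b
    · rw [if_pos h, if_pos h, g_swap hg hab h]
      ring
    · rw [if_neg h, if_neg h]
  have diag : ∀ a : Fin p,
      ∑ J : Fin p → Fin n, ∑ i : Fin n, g (Function.update J a i) ^ 2
        = (n : ℝ) * ∑ J, g J ^ 2 := by
    intro a
    have := reindex (n := n) a (fun K _ _ => g K ^ 2)
    rw [this]
    simp [Finset.sum_const, mul_comm, Finset.mul_sum]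
  have offd : ∀ (a b : Fin p), a ≠ b →
      ∑ J : Fin p → Fin n, ∑ i : Fin n,
          (if J a = J b then - g (Function.update J a i) ^ 2 else 0)
        = - ∑ J, g J ^ 2 := by
    intro a b hab
    have hre := reindex (n := n) a (fun K _ v => if v = K b then - g K ^ 2 else 0)
    have hl : ∑ J : Fin p → Fin n, ∑ i : Fin n,
          (if J a = J b then - g (Function.update J a i) ^ 2 else 0)
        = ∑ J : Fin p → Fin n, ∑ i : Fin n,
            (if J a = (Function.update J a i) b then - g (Function.update J a i) ^ 2 else 0) := by
      refine Finset.sum_congr rfl fun J _ => Finset.sum_congr rfl fun i _ => ?_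
      rw [Function.update_of_ne (Ne.symm hab)]
    rw [hl, hre]
    refine Eq.trans (Finset.sum_congr rfl fun K _ => ?_)
      (by rw [← Finset.sum_neg_distrib])
    rw [sum_ite_pick (K b) (fun _ => - g K ^ 2)]
  calc ∑ J : Fin p → Fin n, ∑ i : Fin n, ∑ j : Fin n, (Tm g J i j) ^ 2
      = ∑ J : Fin p → Fin n, ∑ i : Fin n,
          ((∑ a : Fin p, g (Function.update J a i) ^ 2)
            + ∑ a : Fin p, ∑ b ∈ Finset.univ.erase a,
                (if J a = J b then - g (Function.update J a i) ^ 2 else 0)) := by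
        exact Finset.sum_congr rfl fun J _ => Finset.sum_congr rfl fun i _ => by
          rw [step1 J i, step2 J i]
    _ = (∑ a : Fin p, ∑ J : Fin p → Fin n, ∑ i : Fin n, g (Function.update J a i) ^ 2)
          + ∑ a : Fin p, ∑ b ∈ Finset.univ.erase a, ∑ J : Fin p → Fin n, ∑ i : Fin n,
              (if J a = J b then - g (Function.update J a i) ^ 2 else 0) := by
        rw [show (∑ J : Fin p → Fin n, ∑ i : Fin n,
            ((∑ a : Fin p, g (Function.update J a i) ^ 2)
              + ∑ a : Fin p, ∑ b ∈ Finset.univ.erase a,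
                  (if J a = J b then - g (Function.update J a i) ^ 2 else 0)))
          = (∑ J : Fin p → Fin n, ∑ i : Fin n, ∑ a : Fin p, g (Function.update J a i) ^ 2)
            + ∑ J : Fin p → Fin n, ∑ i : Fin n, ∑ a : Fin p, ∑ b ∈ Finset.univ.erase a,
                (if J a = J b then - g (Function.update J a i) ^ 2 else 0) from by
          rw [← Finset.sum_add_distrib]
          exact Finset.sum_congr rfl fun J _ => by rw [← Finset.sum_add_distrib]]
        congr 1
        · rw [Finset.sum_congr rfl fun J (_ : J ∈ Finset.univ) => Finset.sum_comm]
          exact Finset.sum_comm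
        · rw [Finset.sum_congr rfl fun J (_ : J ∈ Finset.univ) => Finset.sum_comm]
          rw [Finset.sum_congr rfl fun J (_ : J ∈ Finset.univ) =>
            Finset.sum_congr rfl fun a (_ : a ∈ Finset.univ) => Finset.sum_comm]
          rw [Finset.sum_comm]
          exact Finset.sum_congr rfl fun a _ => Finset.sum_comm
    _ = ((p * n : ℕ) : ℝ) * (∑ J, g J ^ 2) - ((p * (p - 1) : ℕ) : ℝ) * (∑ J, g J ^ 2) := by
        rw [Finset.sum_congr rfl fun a _ => diag a]
        have : ∀ a : Fin p, ∑ b ∈ Finset.univ.erase a, ∑ J : Fin p → Fin n, ∑ i : Fin n,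
              (if J a = J b then - g (Function.update J a i) ^ 2 else 0)
            = ((p - 1 : ℕ) : ℝ) * (- ∑ J, g J ^ 2) := by
          intro a
          rw [Finset.sum_congr rfl fun b hb => offd a b (fun h => (Finset.mem_erase.1 hb).1 h.symm)]
          rw [Finset.sum_const, Finset.card_erase_of_mem (Finset.mem_univ a), Finset.card_univ]
          simp [nsmul_eq_mul]
        rw [Finset.sum_congr rfl fun a _ => this a]
        simp only [Finset.sum_const, Finset.card_univ, Fintype.card_fun, nsmul_eq_mul,
          Fintype.card_fin]
        push_cast
        ring

lemma cross {n p : ℕ} {g : (Fin p → Fin n) → ℝ} (hg : IsAlt g) (J : Fin p → Fin n) :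
    ∑ i : Fin n, ∑ j : Fin n, Tm g J i j * Tm g J j i = (p : ℝ) * g J ^ 2 := by
  have h0 : ∀ i j : Fin n, Tm g J i j * Tm g J j i
      = ∑ a : Fin p, ∑ b : Fin p, (if j = J a then g (Function.update J a i) else 0)
          * (if i = J b then g (Function.update J b j) else 0) := by
    intro i j; rw [Tm, Tm, Finset.sum_mul_sum]
  have h1 : ∀ i : Fin n, ∑ j : Fin n, Tm g J i j * Tm g J j i
      = ∑ a : Fin p, ∑ b : Fin p,
          (if i = J b then g (Function.update J a i) * g (Function.update J b (J a)) else 0) := by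
    intro i
    rw [Finset.sum_congr rfl fun j _ => h0 i j, Finset.sum_comm]
    refine Finset.sum_congr rfl fun a _ => ?_
    rw [Finset.sum_comm]
    refine Finset.sum_congr rfl fun b _ => ?_
    have he : ∀ j : Fin n, (if j = J a then g (Function.update J a i) else 0)
          * (if i = J b then g (Function.update J b j) else 0)
        = if j = J a then
            (if i = J b then g (Function.update J a i) * g (Function.update J b j) else 0)
          else 0 := by
      intro j
      rcases eq_or_ne j (J a) with h | h <;> rcases eq_or_ne i (J b) with h' | h' <;>
        simp [h, h']
    rw [Finset.sum_congr rfl fun j _ => he j, sum_ite_pick (J a) _]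
  rw [Finset.sum_congr rfl fun i _ => h1 i, Finset.sum_comm]
  rw [Finset.sum_congr rfl fun a (_ : a ∈ Finset.univ) => Finset.sum_comm]
  have h2 : ∀ a b : Fin p,
      ∑ i : Fin n, (if i = J b then g (Function.update J a i) * g (Function.update J b (J a)) else 0)
        = g (Function.update J a (J b)) * g (Function.update J b (J a)) :=
    fun a b => sum_ite_pick (J b) _
  rw [Finset.sum_congr rfl fun a _ => Finset.sum_congr rfl fun b _ => h2 a b]
  have h3 : ∀ a b : Fin p, g (Function.update J a (J b)) * g (Function.update J b (J a))
      = if a = b then g J ^ 2 else 0 := by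
    intro a b
    rcases eq_or_ne a b with rfl | hab
    · simp [Function.update_eq_self, sq]
    · have hK : (Function.update J a (J b)) a = (Function.update J a (J b)) b := by
        rw [Function.update_self, Function.update_of_ne (Ne.symm hab)]
      rw [if_neg hab, g_zero hg hab hK, zero_mul]
  rw [Finset.sum_congr rfl fun a _ => Finset.sum_congr rfl fun b _ => h3 a b]
  have h4 : ∀ a : Fin p, ∑ b : Fin p, (if a = b then g J ^ 2 else 0) = g J ^ 2 := by
    intro a
    rw [Finset.sum_ite_eq Finset.univ a (fun _ => g J ^ 2)]
    simp
  rw [Finset.sum_congr rfl fun a _ => h4 a]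
  simp [sq, mul_comm, mul_assoc]

lemma xi_antisym {n p : ℕ} (g : (Fin p → Fin n) → ℝ) (J : Fin p → Fin n) :
    IsAntisym (xiForm g J) := by
  unfold IsAntisym
  ext i j
  simp only [Matrix.transpose_apply, Matrix.neg_apply, xiForm]
  ring

lemma key {n p : ℕ} {g : (Fin p → Fin n) → ℝ} (hg : IsAlt g) :
    ∑ J : Fin p → Fin n, inner2 (xiForm g J) (xiForm g J)
      = (((p * n : ℕ) : ℝ) - ((p * (p - 1) : ℕ) : ℝ) - (p : ℝ)) * ∑ J, g J ^ 2 := by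
  have per : ∀ J : Fin p → Fin n, inner2 (xiForm g J) (xiForm g J)
      = (∑ i : Fin n, ∑ j : Fin n, Tm g J i j ^ 2)
          - ∑ i : Fin n, ∑ j : Fin n, Tm g J i j * Tm g J j i := by
    intro J
    rw [inner2]
    have e : ∀ i j : Fin n, xiForm g J i j * xiForm g J i j
        = (Tm g J i j ^ 2 - Tm g J i j * Tm g J j i)
            + (Tm g J j i ^ 2 - Tm g J j i * Tm g J i j) := by
      intro i j
      show (Tm g J i j - Tm g J j i) * (Tm g J i j - Tm g J j i) = _
      ring
    rw [Finset.sum_congr rfl fun i _ => Finset.sum_congr rfl fun j _ => e i j]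
    rw [show (∑ i : Fin n, ∑ j : Fin n, ((Tm g J i j ^ 2 - Tm g J i j * Tm g J j i)
            + (Tm g J j i ^ 2 - Tm g J j i * Tm g J i j)))
        = (∑ i : Fin n, ∑ j : Fin n, (Tm g J i j ^ 2 - Tm g J i j * Tm g J j i))
            + ∑ i : Fin n, ∑ j : Fin n, (Tm g J j i ^ 2 - Tm g J j i * Tm g J i j) from by
      rw [← Finset.sum_add_distrib]
      exact Finset.sum_congr rfl fun i _ => by rw [← Finset.sum_add_distrib]]
    rw [show (∑ i : Fin n, ∑ j : Fin n, (Tm g J j i ^ 2 - Tm g J j i * Tm g J i j))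
        = ∑ i : Fin n, ∑ j : Fin n, (Tm g J i j ^ 2 - Tm g J i j * Tm g J j i) from
      Finset.sum_comm]
    rw [show (∑ i : Fin n, ∑ j : Fin n, (Tm g J i j ^ 2 - Tm g J i j * Tm g J j i))
        = (∑ i : Fin n, ∑ j : Fin n, Tm g J i j ^ 2)
            - ∑ i : Fin n, ∑ j : Fin n, Tm g J i j * Tm g J j i from by
      rw [← Finset.sum_sub_distrib]
      exact Finset.sum_congr rfl fun i _ => by rw [← Finset.sum_sub_distrib]]
    ring
  rw [Finset.sum_congr rfl fun J _ => per J, Finset.sum_sub_distrib, sumT2 hg,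
    Finset.sum_congr rfl fun J _ => cross hg J, ← Finset.mul_sum]
  ring

/-- Let `𝔯` be a self-adjoint operator on `2`-forms with smallest eigenvalue `≥ λ`
and largest eigenvalue `≤ Λ`.  Then (with `p = m+1`, sums over increasing
multi-indices rewritten as sums over all multi-indices divided by `p!`)
`p(n−p) λ |g|² ≤ Σ_{i_1<…<i_p} ⟨𝔯 ξ^g, ξ^g⟩ ≤ p(n−p) Λ |g|²`. -/
theorem stmt13 (n m : ℕ) (hpn : m + 1 ≤ n - 1)
    (r : Matrix (Fin n) (Fin n) ℝ →ₗ[ℝ] Matrix (Fin n) (Fin n) ℝ)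
    (hranti : ∀ A, IsAntisym A → IsAntisym (r A))
    (hsym : ∀ A B, IsAntisym A → IsAntisym B → inner2 (r A) B = inner2 A (r B))
    (lam Lam : ℝ)
    (hlo : ∀ A, IsAntisym A → lam * inner2 A A ≤ inner2 (r A) A)
    (hhi : ∀ A, IsAntisym A → inner2 (r A) A ≤ Lam * inner2 A A)
    (g : (Fin (m + 1) → Fin n) → ℝ) (hg : IsAlt g) :
    (((m + 1) * (n - (m + 1)) : ℕ) : ℝ) * lam *
        (((Nat.factorial (m + 1) : ℝ))⁻¹ * ∑ J : Fin (m + 1) → Fin n, g J ^ 2)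
      ≤ ((Nat.factorial (m + 1) : ℝ))⁻¹ *
          ∑ J : Fin (m + 1) → Fin n, inner2 (r (xiForm g J)) (xiForm g J) ∧
    ((Nat.factorial (m + 1) : ℝ))⁻¹ *
          ∑ J : Fin (m + 1) → Fin n, inner2 (r (xiForm g J)) (xiForm g J)
      ≤ (((m + 1) * (n - (m + 1)) : ℕ) : ℝ) * Lam *
        (((Nat.factorial (m + 1) : ℝ))⁻¹ * ∑ J : Fin (m + 1) → Fin n, g J ^ 2) := by
  have hn : m + 1 ≤ n := le_trans hpn (Nat.sub_le n 1)
  set S : ℝ := ∑ J : Fin (m + 1) → Fin n, g J ^ 2 with hS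
  set R : ℝ := ∑ J : Fin (m + 1) → Fin n, inner2 (r (xiForm g J)) (xiForm g J) with hR
  set C : ℝ := (((m + 1) * (n - (m + 1)) : ℕ) : ℝ) with hC
  have hkey : ∑ J : Fin (m + 1) → Fin n, inner2 (xiForm g J) (xiForm g J) = C * S := by
    rw [key hg]
    congr 1
    rw [hC]
    push_cast [Nat.cast_sub hn, Nat.add_sub_cancel]
    ring
  have hf : (0 : ℝ) ≤ ((Nat.factorial (m + 1) : ℝ))⁻¹ := by positivity
  have hlos : lam * (C * S) ≤ R := by
    calc lam * (C * S) = ∑ J : Fin (m + 1) → Fin n, lam * inner2 (xiForm g J) (xiForm g J) := by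
          rw [← Finset.mul_sum, hkey]
      _ ≤ R := Finset.sum_le_sum fun J _ => hlo _ (xi_antisym g J)
  have hhis : R ≤ Lam * (C * S) := by
    calc R ≤ ∑ J : Fin (m + 1) → Fin n, Lam * inner2 (xiForm g J) (xiForm g J) :=
          Finset.sum_le_sum fun J _ => hhi _ (xi_antisym g J)
      _ = Lam * (C * S) := by rw [← Finset.mul_sum, hkey]
  constructor
  · calc C * lam * (((Nat.factorial (m + 1) : ℝ))⁻¹ * S)
        = ((Nat.factorial (m + 1) : ℝ))⁻¹ * (lam * (C * S)) := by ring
      _ ≤ ((Nat.factorial (m + 1) : ℝ))⁻¹ * R := mul_le_mul_of_nonneg_left hlos hf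
  · calc ((Nat.factorial (m + 1) : ℝ))⁻¹ * R
        ≤ ((Nat.factorial (m + 1) : ℝ))⁻¹ * (Lam * (C * S)) :=
          mul_le_mul_of_nonneg_left hhis hf
      _ = C * Lam * (((Nat.factorial (m + 1) : ℝ))⁻¹ * S) := by ring
end

section
/- For any alternating p-tensor g on ℝ^n, with ξ^g_{i_1...i_p} = Σ_{a,i} g_{i_1...(i)_a...i_p} ω^i ∧ ω^{i_a}, the Weitzenböck curvature term Σ_{i_1<...<i_p} ⟨𝔯 ξ^g_{i_1...i_p}, ξ^g_{i_1...i_p}⟩ for the identity operator 𝔯 = Id on 2-forms satisfies Σ_{i_1<...<i_p} |ξ^g_{i_1...i_p}|² = p(n−p)|g|². -/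
/-! ### Auxiliary material -/

lemma isAlt_swap {n p : ℕ} {g : (Fin p → Fin n) → ℝ} (hg : IsAlt g)
    (J : Fin p → Fin n) {a b : Fin p} (hab : a ≠ b) :
    g (J ∘ Equiv.swap a b) = - g J := by
  have h := hg J (Equiv.swap a b)
  rw [Equiv.Perm.sign_swap hab] at h
  push_cast at h
  linarith

lemma isAlt_eq_zero {n p : ℕ} {g : (Fin p → Fin n) → ℝ} (hg : IsAlt g)
    {J : Fin p → Fin n} {a b : Fin p} (hab : a ≠ b) (hJ : J a = J b) :
    g J = 0 := by
  have h1 : J ∘ Equiv.swap a b = J := by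
    funext x
    rcases eq_or_ne x a with rfl | hxa
    · simp [Equiv.swap_apply_left, hJ]
    rcases eq_or_ne x b with rfl | hxb
    · simp [Equiv.swap_apply_right, hJ]
    · simp [Equiv.swap_apply_of_ne_of_ne hxa hxb]
  have h2 := isAlt_swap hg J hab
  rw [h1] at h2
  linarith

/-- The involution `(J, i) ↦ (J[a := i], J a)`. -/
def updEquiv {n p : ℕ} (a : Fin p) :
    ((Fin p → Fin n) × Fin n) ≃ ((Fin p → Fin n) × Fin n) where
  toFun x := (Function.update x.1 a x.2, x.1 a)
  invFun x := (Function.update x.1 a x.2, x.1 a)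
  left_inv x := by
    simp [Function.update_idem, Function.update_self, Function.update_eq_self]
  right_inv x := by
    simp [Function.update_idem, Function.update_self, Function.update_eq_self]

/-- One half of `Pm g J`, the coefficient array `A J i j = Σ_a [j = J a] g (J[a:=i])`. -/
def Pm {n p : ℕ} (g : (Fin p → Fin n) → ℝ) (J : Fin p → Fin n) (i j : Fin n) : ℝ :=
  ∑ a : Fin p, if j = J a then g (Function.update J a i) else 0

lemma sum_rot3 {M α β γ : Type*} [AddCommMonoid M] [Fintype α] [Fintype β] [Fintype γ]
    (f : α → β → γ → M) :
    ∑ j : α, ∑ a : β, ∑ b : γ, f j a b = ∑ a : β, ∑ b : γ, ∑ j : α, f j a b := by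
  rw [Finset.sum_comm]
  exact Finset.sum_congr rfl fun a _ => Finset.sum_comm

lemma sum_swap4 {M α β γ δ : Type*} [AddCommMonoid M]
    [Fintype α] [Fintype β] [Fintype γ] [Fintype δ]
    (f : α → β → γ → δ → M) :
    ∑ i : α, ∑ j : β, ∑ a : γ, ∑ b : δ, f i j a b
      = ∑ a : γ, ∑ b : δ, ∑ i : α, ∑ j : β, f i j a b := by
  calc ∑ i : α, ∑ j : β, ∑ a : γ, ∑ b : δ, f i j a b
      = ∑ i : α, ∑ a : γ, ∑ j : β, ∑ b : δ, f i j a b :=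
        Finset.sum_congr rfl fun i _ => Finset.sum_comm
    _ = ∑ i : α, ∑ a : γ, ∑ b : δ, ∑ j : β, f i j a b :=
        Finset.sum_congr rfl fun i _ => Finset.sum_congr rfl fun a _ => Finset.sum_comm
    _ = ∑ a : γ, ∑ i : α, ∑ b : δ, ∑ j : β, f i j a b := Finset.sum_comm
    _ = ∑ a : γ, ∑ b : δ, ∑ i : α, ∑ j : β, f i j a b :=
        Finset.sum_congr rfl fun a _ => Finset.sum_comm

lemma key1 {n p : ℕ} {g : (Fin p → Fin n) → ℝ} (hg : IsAlt g) (a b : Fin p) :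
    ∑ x : (Fin p → Fin n) × Fin n,
      (if x.1 a = x.1 b then
        g (Function.update x.1 a x.2) * g (Function.update x.1 b x.2) else 0)
    = if a = b then (n : ℝ) * ∑ J : Fin p → Fin n, g J ^ 2
      else - ∑ J : Fin p → Fin n, g J ^ 2 := by
  rcases eq_or_ne a b with rfl | hab
  · simp only [if_pos rfl]
    rw [Fintype.sum_equiv (updEquiv a) _ (fun x => g x.1 * g x.1)
      (fun x => by simp [updEquiv])]
    rw [Fintype.sum_prod_type]
    simp [Finset.sum_const, Fintype.card_fin, sq, Finset.mul_sum]
  · rw [if_neg hab]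
    have hsum : ∀ x : (Fin p → Fin n) × Fin n,
        (if x.1 a = x.1 b then
          g (Function.update x.1 a x.2) * g (Function.update x.1 b x.2) else 0)
        = (if x.1 a = x.1 b then
            -(g (Function.update x.1 a x.2) * g (Function.update x.1 a x.2)) else 0) := by
      rintro ⟨J, i⟩
      dsimp only
      split_ifs with h
      · have hupd : Function.update J b i = (Function.update J a i) ∘ Equiv.swap a b := by
          funext x
          rcases eq_or_ne x a with rfl | hxa
          · rw [Function.comp_apply, Equiv.swap_apply_left,
              Function.update_of_ne hab, Function.update_of_ne hab.symm]
            exact h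
          rcases eq_or_ne x b with rfl | hxb
          · rw [Function.comp_apply, Equiv.swap_apply_right,
              Function.update_self, Function.update_self]
          · rw [Function.comp_apply, Equiv.swap_apply_of_ne_of_ne hxa hxb,
              Function.update_of_ne hxb, Function.update_of_ne hxa]
        rw [hupd, isAlt_swap hg _ hab]
        ring
      · rfl
    simp only [hsum]
    rw [Fintype.sum_equiv (updEquiv a) _
      (fun x => if x.1 b = x.2 then -(g x.1 * g x.1) else 0)
      (fun x => by
        simp only [updEquiv, Equiv.coe_fn_mk, Function.update_of_ne (Ne.symm hab)]
        congr 1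
        simp [eq_comm])]
    rw [Fintype.sum_prod_type]
    simp [Finset.sum_ite_eq, sq]

lemma key2 {n p : ℕ} {g : (Fin p → Fin n) → ℝ} (hg : IsAlt g)
    (J : Fin p → Fin n) (a b : Fin p) :
    ∑ i : Fin n, ∑ j : Fin n,
      (if j = J a then g (Function.update J a i) else 0) *
      (if i = J b then g (Function.update J b j) else 0)
    = if a = b then g J ^ 2 else 0 := by
  have step : ∀ i j : Fin n,
      (if j = J a then g (Function.update J a i) else 0) *
      (if i = J b then g (Function.update J b j) else 0)
      = (if i = J b then (if j = J a then
          g (Function.update J a i) * g (Function.update J b j) else 0) else 0) := by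
    intro i j; split_ifs <;> ring
  simp only [step]
  rw [Finset.sum_comm]
  simp only [Finset.sum_ite_eq', Finset.mem_univ, if_true]
  rcases eq_or_ne a b with rfl | hab
  · simp [Function.update_eq_self, sq]
  · rw [if_neg hab]
    have hz : g (Function.update J a (J b)) = 0 := by
      refine isAlt_eq_zero hg hab ?_
      rw [Function.update_self, Function.update_of_ne (Ne.symm hab)]
    rw [hz, zero_mul]

/-- For `𝔯 = Id`, the Weitzenböck curvature term is
`Σ_{i_1<…<i_p} |ξ^g_{i_1…i_p}|² = p(n−p)|g|²` (with `p = m+1`, sums over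
increasing multi-indices written as sums over all multi-indices divided by `p!`). -/
theorem stmt14 (n m : ℕ) (hpn : m + 1 ≤ n)
    (g : (Fin (m + 1) → Fin n) → ℝ) (hg : IsAlt g) :
    ((Nat.factorial (m + 1) : ℝ))⁻¹ *
        ∑ J : Fin (m + 1) → Fin n, inner2 (xiForm g J) (xiForm g J)
      = (((m + 1) * (n - (m + 1)) : ℕ) : ℝ) *
        (((Nat.factorial (m + 1) : ℝ))⁻¹ * ∑ J : Fin (m + 1) → Fin n, g J ^ 2) := by
  set G : ℝ := ∑ J : Fin (m + 1) → Fin n, g J ^ 2 with hG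
  -- Step 1: expand inner2 per multi-index J.
  have expand : ∀ J : Fin (m + 1) → Fin n,
      inner2 (xiForm g J) (xiForm g J)
        = (∑ i : Fin n, ∑ j : Fin n, Pm g J i j * Pm g J i j)
          - ∑ i : Fin n, ∑ j : Fin n, Pm g J i j * Pm g J j i := by
    intro J
    have hx : ∀ i j : Fin n, xiForm g J i j = Pm g J i j - Pm g J j i := fun _ _ => rfl
    unfold inner2
    simp_rw [hx]
    have h1 : ∀ i j : Fin n,
        (Pm g J i j - Pm g J j i) * (Pm g J i j - Pm g J j i)
          = (Pm g J i j * Pm g J i j + Pm g J j i * Pm g J j i)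
            - (Pm g J i j * Pm g J j i + Pm g J j i * Pm g J i j) := fun _ _ => by ring
    simp_rw [h1, Finset.sum_sub_distrib, Finset.sum_add_distrib]
    have hsymm : (∑ i : Fin n, ∑ j : Fin n, Pm g J j i * Pm g J j i)
        = ∑ i : Fin n, ∑ j : Fin n, Pm g J i j * Pm g J i j := Finset.sum_comm
    have hsymm2 : (∑ i : Fin n, ∑ j : Fin n, Pm g J j i * Pm g J i j)
        = ∑ i : Fin n, ∑ j : Fin n, Pm g J i j * Pm g J j i := Finset.sum_comm
    rw [hsymm, hsymm2]
    ring
  -- Step 2: the cross term.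
  have cross : ∀ J : Fin (m + 1) → Fin n,
      (∑ i : Fin n, ∑ j : Fin n, Pm g J i j * Pm g J j i)
        = ((m + 1 : ℕ) : ℝ) * g J ^ 2 := by
    intro J
    have hPP : ∀ i j : Fin n, Pm g J i j * Pm g J j i
        = ∑ a : Fin (m + 1), ∑ b : Fin (m + 1),
            (if j = J a then g (Function.update J a i) else 0) *
            (if i = J b then g (Function.update J b j) else 0) := by
      intro i j
      rw [Pm, Pm, Finset.sum_mul_sum]
    simp_rw [hPP]
    rw [sum_swap4]
    simp_rw [key2 hg J]
    rw [Finset.sum_congr rfl fun a _ => Finset.sum_ite_eq Finset.univ a fun _ => g J ^ 2]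
    simp only [Finset.mem_univ, if_true, Finset.sum_const, Finset.card_univ,
      Fintype.card_fin, nsmul_eq_mul]
  -- Step 3: the square term.
  have square :
      (∑ J : Fin (m + 1) → Fin n, ∑ i : Fin n, ∑ j : Fin n, Pm g J i j * Pm g J i j)
        = ((m + 1 : ℕ) : ℝ) * ((n : ℝ) * G)
          + (((m + 1 : ℕ) : ℝ) * (((m + 1 : ℕ) : ℝ) - 1)) * (-G) := by
    have hPP : ∀ (J : Fin (m + 1) → Fin n) (i j : Fin n), Pm g J i j * Pm g J i j
        = ∑ a : Fin (m + 1), ∑ b : Fin (m + 1),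
            (if j = J a then (if j = J b then
              g (Function.update J a i) * g (Function.update J b i) else 0) else 0) := by
      intro J i j
      rw [Pm, Finset.sum_mul_sum]
      refine Finset.sum_congr rfl fun a _ => Finset.sum_congr rfl fun b _ => ?_
      split_ifs <;> ring
    simp_rw [hPP]
    have hrot : ∀ (J : Fin (m + 1) → Fin n) (i : Fin n),
        (∑ j : Fin n, ∑ a : Fin (m + 1), ∑ b : Fin (m + 1),
          (if j = J a then (if j = J b then
            g (Function.update J a i) * g (Function.update J b i) else 0) else 0))
        = ∑ a : Fin (m + 1), ∑ b : Fin (m + 1),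
            (if J a = J b then
              g (Function.update J a i) * g (Function.update J b i) else 0) := by
      intro J i
      rw [sum_rot3]
      refine Finset.sum_congr rfl fun a _ => Finset.sum_congr rfl fun b _ => ?_
      rw [Finset.sum_ite_eq' Finset.univ (J a)]
      simp only [Finset.mem_univ, if_true]
    simp_rw [hrot]
    rw [sum_swap4]
    have hfin : ∀ a b : Fin (m + 1),
        (∑ J : Fin (m + 1) → Fin n, ∑ i : Fin n,
          (if J a = J b then
            g (Function.update J a i) * g (Function.update J b i) else 0))
        = if a = b then (n : ℝ) * G else -G := by
      intro a b
      have h := key1 hg a b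
      rw [Fintype.sum_prod_type] at h
      exact h
    simp_rw [hfin]
    have hab : ∀ a : Fin (m + 1),
        (∑ b : Fin (m + 1), if a = b then (n : ℝ) * G else -G)
          = (n : ℝ) * G + (((m + 1 : ℕ) : ℝ) - 1) * (-G) := by
      intro a
      have hpt : ∀ b : Fin (m + 1), (if a = b then (n : ℝ) * G else -G)
          = -G + (if a = b then (n : ℝ) * G + G else 0) := by
        intro b; split_ifs <;> ring
      simp_rw [hpt]
      rw [Finset.sum_add_distrib, Finset.sum_const,
        Finset.sum_ite_eq Finset.univ a fun _ => (n : ℝ) * G + G]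
      simp only [Finset.mem_univ, if_true, Finset.card_univ, Fintype.card_fin, nsmul_eq_mul]
      push_cast
      ring
    simp_rw [hab]
    rw [Finset.sum_const]
    simp only [Finset.card_univ, Fintype.card_fin, nsmul_eq_mul]
    push_cast
    ring
  -- Assemble.
  have total : (∑ J : Fin (m + 1) → Fin n, inner2 (xiForm g J) (xiForm g J))
      = (((m + 1) * (n - (m + 1)) : ℕ) : ℝ) * G := by
    simp_rw [expand]
    rw [Finset.sum_sub_distrib, square]
    simp_rw [cross]
    rw [← Finset.mul_sum, ← hG]
    have hcast : ((n - (m + 1) : ℕ) : ℝ) = (n : ℝ) - ((m + 1 : ℕ) : ℝ) :=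
      Nat.cast_sub hpn
    push_cast [hcast]
    ring
  rw [total]
  ring
end

section
/- Let H₁ →^T H₂ →^S H₃ be a complex (S∘T = 0) of closed densely defined operators between Hilbert spaces, and L ⊆ H₂ a closed subspace containing Im(T). Fix f ∈ L ∩ Ker(S) and a constant C > 0. Then the following are equivalent: (1) there exists u ∈ Dom(T) with T u = f and ‖u‖ ≤ C; (2) |⟨f, g⟩|² ≤ C² (‖T* g‖² + ‖S g‖²) for all g ∈ L ∩ Dom(T*) ∩ Dom(S). -/
/-!
(1) ⇒ (2) is Cauchy–Schwarz, since `⟪f, g⟫ = ⟪u, T* g⟫`.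

For (2) ⇒ (1), put `N = L ∩ Ker S`, a closed subspace containing `Im T` and `f`. The component
of `g ∈ Dom T*` in `Nᗮ` is orthogonal to `Im T`, hence lies in `Ker T*`, and is orthogonal to `f`;
so (2) applied to the component in `N` gives `|⟪f, g⟫| ≤ C ‖T* g‖` for every `g ∈ Dom T*`.
Thus `T* g ↦ ⟪f, g⟫` is a well-defined functional of norm `≤ C` on `Im T*`; Hahn–Banach and
Riesz produce `u` with `‖u‖ ≤ C` and `⟪T* g, u⟫ = ⟪g, f⟫` for all `g`, i.e. `(u, f)` lies in the
graph of `T** = T`.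
-/

open scoped InnerProductSpace LinearPMap RealInnerProductSpace ComplexConjugate

namespace Submodule

variable {𝕜 E F : Type*} [RCLike 𝕜]
  [NormedAddCommGroup E] [InnerProductSpace 𝕜 E] [CompleteSpace E]
  [NormedAddCommGroup F] [InnerProductSpace 𝕜 F] [CompleteSpace F]

theorem adjoint_adjoint_le {g : Submodule 𝕜 (E × F)} (hg : IsClosed (g : Set (E × F))) :
    g.adjoint.adjoint ≤ g := by
  set G := g.comap (WithLp.linearEquiv 2 𝕜 (E × F)).toLinearMap
  have : CompleteSpace G := (hg.preimage (WithLp.prod_continuous_ofLp 2 E F)).completeSpace_coe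
  intro x hx
  suffices WithLp.toLp 2 x ∈ Gᗮᗮ by rwa [orthogonal_orthogonal] at this
  refine (mem_orthogonal _ _).2 fun v hv ↦ ?_
  have hv_adjoint : (v.snd, -v.fst) ∈ g.adjoint := by
    refine (mem_adjoint_iff _ _).2 fun a b hab ↦ ?_
    have := (mem_orthogonal G v).1 hv (WithLp.toLp 2 (a, b)) hab
    rw [WithLp.prod_inner_apply] at this
    rw [inner_neg_right, sub_neg_eq_add, add_comm]
    exact this
  have := (mem_adjoint_iff _ _).1 hx _ _ hv_adjoint
  rw [inner_neg_left] at this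
  simp only [WithLp.prod_inner_apply, WithLp.ofLp_fst, WithLp.ofLp_snd]
  linear_combination -this

end Submodule

theorem LinearMap.exists_strongDual_comp_eq_of_norm_le {𝕜 D E : Type*} [RCLike 𝕜]
    [AddCommGroup D] [Module 𝕜 D] [NormedAddCommGroup E] [NormedSpace 𝕜 E]
    (A : D →ₗ[𝕜] E) (B : D →ₗ[𝕜] 𝕜) {C : ℝ} (hC : 0 ≤ C) (h : ∀ d, ‖B d‖ ≤ C * ‖A d‖) :
    ∃ w : StrongDual 𝕜 E, ‖w‖ ≤ C ∧ ∀ d, w (A d) = B d := by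
  have hker : LinearMap.ker A ≤ LinearMap.ker B := fun d hd ↦ by
    simpa [LinearMap.mem_ker.1 hd] using h d
  set φ : LinearMap.range A →ₗ[𝕜] 𝕜 :=
    (LinearMap.ker A).liftQ B hker ∘ₗ A.quotKerEquivRange.symm.toLinearMap
  have hφ (d : D) : φ ⟨A d, LinearMap.mem_range_self A d⟩ = B d := by
    simp [φ, LinearMap.quotKerEquivRange_symm_apply_image]
  have hφC (y : LinearMap.range A) : ‖φ y‖ ≤ C * ‖y‖ := by
    obtain ⟨_, d, rfl⟩ := y
    exact (hφ d).symm ▸ h d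
  obtain ⟨w, hw, hwφ⟩ := exists_extension_norm_eq _ (φ.mkContinuous C hφC)
  exact ⟨w, hwφ ▸ φ.mkContinuous_norm_le hC hφC, fun d ↦ (hw ⟨A d, _⟩).trans (hφ d)⟩

namespace LinearPMap

section Kernel

variable {R E F : Type*} [CommRing R] [AddCommGroup E] [Module R E] [AddCommGroup F] [Module R F]

def ker (S : E →ₗ.[R] F) : Submodule R E := S.graph.comap (LinearMap.inl R E F)

theorem mem_ker {S : E →ₗ.[R] F} {x : E} : x ∈ S.ker ↔ ∃ h : x ∈ S.domain, S ⟨x, h⟩ = 0 := by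
  simp only [ker, Submodule.mem_comap, LinearMap.inl_apply, mem_graph_iff]
  constructor
  · rintro ⟨y, rfl, hy⟩
    exact ⟨y.2, hy⟩
  · rintro ⟨h, hx⟩
    exact ⟨⟨x, h⟩, rfl, hx⟩

theorem IsClosed.isClosed_ker [TopologicalSpace E] [TopologicalSpace F] {S : E →ₗ.[R] F}
    (hS : S.IsClosed) : _root_.IsClosed (S.ker : Set E) :=
  hS.preimage (by fun_prop : Continuous fun x : E ↦ (x, (0 : F)))

end Kernel

variable {𝕜 E F : Type*} [RCLike 𝕜]
  [NormedAddCommGroup E] [InnerProductSpace 𝕜 E] [CompleteSpace E]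
  [NormedAddCommGroup F] [InnerProductSpace 𝕜 F]
  {T : E →ₗ.[𝕜] F}

theorem norm_inner_apply_le (hT : Dense (T.domain : Set E)) (x : T.domain) (g : T†.domain) :
    ‖⟪T x, (g : F)⟫_𝕜‖ ≤ ‖(x : E)‖ * ‖T† g‖ := by
  rw [(adjoint_isFormalAdjoint hT).symm x g]
  exact norm_inner_le_norm _ _

theorem norm_inner_le_of_forall_mem (hT : Dense (T.domain : Set E)) (N : Submodule 𝕜 F)
    [N.HasOrthogonalProjection] (hTN : ∀ x : T.domain, (T x : F) ∈ N) {f : F} (hf : f ∈ N)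
    {C : ℝ} (h : ∀ g : T†.domain, (g : F) ∈ N → ‖⟪f, (g : F)⟫_𝕜‖ ≤ C * ‖T† g‖)
    (g : T†.domain) : ‖⟪f, (g : F)⟫_𝕜‖ ≤ C * ‖T† g‖ := by
  set g₂ : F := g - N.starProjection g
  have hg₂N : g₂ ∈ Nᗮ := N.sub_starProjection_mem_orthogonal _
  have hg₂T : ∀ x : T.domain, ⟪(0 : E), (x : E)⟫_𝕜 = ⟪g₂, T x⟫_𝕜 := fun x ↦ by
    rw [inner_zero_left, (Submodule.mem_orthogonal' N g₂).1 hg₂N _ (hTN x)]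
  have hg₂ : g₂ ∈ T†.domain := mem_adjoint_domain_of_exists _ ⟨0, hg₂T⟩
  set g₁ : T†.domain := g - ⟨g₂, hg₂⟩
  have hg₁N : (g₁ : F) ∈ N := by
    simp only [g₁, g₂, Submodule.coe_sub, sub_sub_cancel]
    exact N.starProjection_apply_mem _
  have hTg₁ : T† g₁ = T† g := by rw [map_sub, adjoint_apply_eq hT ⟨g₂, hg₂⟩ hg₂T, sub_zero]
  have hfg₁ : ⟪f, (g₁ : F)⟫_𝕜 = ⟪f, (g : F)⟫_𝕜 := by
    rw [Submodule.coe_sub, inner_sub_right, (Submodule.mem_orthogonal N g₂).1 hg₂N f hf,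
      sub_zero]
  simpa only [hTg₁, hfg₁] using h g₁ hg₁N

theorem exists_norm_le_forall_inner_adjoint_eq {f : F} {C : ℝ} (hC : 0 ≤ C)
    (h : ∀ g : T†.domain, ‖⟪f, (g : F)⟫_𝕜‖ ≤ C * ‖T† g‖) :
    ∃ u : E, ‖u‖ ≤ C ∧ ∀ g : T†.domain, ⟪T† g, u⟫_𝕜 = ⟪(g : F), f⟫_𝕜 := by
  obtain ⟨w, hwC, hw⟩ :=
    T†.toFun.exists_strongDual_comp_eq_of_norm_le (innerₛₗ 𝕜 f ∘ₗ T†.domain.subtype) hC h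
  refine ⟨(InnerProductSpace.toDual 𝕜 E).symm w, by rwa [LinearIsometryEquiv.norm_map],
    fun g ↦ ?_⟩
  rw [← inner_conj_symm, InnerProductSpace.toDual_symm_apply, ← inner_conj_symm (g : F)]
  exact congrArg conj (hw g)

theorem mem_graph_of_forall_inner_adjoint_eq [CompleteSpace F] (hT : Dense (T.domain : Set E))
    (hTc : T.IsClosed) {u : E} {f : F}
    (h : ∀ g : T†.domain, ⟪T† g, u⟫_𝕜 = ⟪(g : F), f⟫_𝕜) : (u, f) ∈ T.graph := by
  apply Submodule.adjoint_adjoint_le hTc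
  rw [← adjoint_graph_eq_graph_adjoint hT, Submodule.mem_adjoint_iff]
  intro a b hab
  obtain ⟨g, rfl, rfl⟩ := (mem_graph_iff _).1 hab
  rw [h g, sub_self]

theorem exists_apply_eq_of_norm_inner_le [CompleteSpace F] (hT : Dense (T.domain : Set E))
    (hTc : T.IsClosed) {f : F} {C : ℝ} (hC : 0 ≤ C)
    (h : ∀ g : T†.domain, ‖⟪f, (g : F)⟫_𝕜‖ ≤ C * ‖T† g‖) :
    ∃ u : T.domain, T u = f ∧ ‖(u : E)‖ ≤ C := by
  obtain ⟨u, huC, hu⟩ := exists_norm_le_forall_inner_adjoint_eq hC h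
  obtain ⟨x, rfl, hx⟩ := (mem_graph_iff _).1 (mem_graph_of_forall_inner_adjoint_eq hT hTc hu)
  exact ⟨x, hx, huC⟩

end LinearPMap

theorem stmt17_general {H1 H2 H3 : Type*}
    [NormedAddCommGroup H1] [InnerProductSpace ℝ H1] [CompleteSpace H1]
    [NormedAddCommGroup H2] [InnerProductSpace ℝ H2] [CompleteSpace H2]
    [NormedAddCommGroup H3] [InnerProductSpace ℝ H3]
    (T : H1 →ₗ.[ℝ] H2) (S : H2 →ₗ.[ℝ] H3)
    (hTdense : Dense (T.domain : Set H1)) (hTclosed : IsClosed (T.graph : Set (H1 × H2)))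
    (hSclosed : IsClosed (S.graph : Set (H2 × H3)))
    (hST : ∀ x : T.domain, ∃ h : (T x : H2) ∈ S.domain, S ⟨T x, h⟩ = 0)
    (L : Submodule ℝ H2) (hL : IsClosed (L : Set H2))
    (hTL : ∀ x : T.domain, (T x : H2) ∈ L)
    (f : H2) (hfL : f ∈ L) (hfS : ∃ h : f ∈ S.domain, S ⟨f, h⟩ = 0)
    (C : ℝ) (hC : 0 < C) :
    (∃ u : T.domain, T u = f ∧ ‖(u : H1)‖ ≤ C) ↔
    (∀ g : H2, g ∈ L → ∀ (hg1 : g ∈ T.adjoint.domain) (hg2 : g ∈ S.domain),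
      ⟪f, g⟫ ^ 2 ≤ C ^ 2 * (‖T.adjoint ⟨g, hg1⟩‖ ^ 2 + ‖S ⟨g, hg2⟩‖ ^ 2)) := by
  constructor
  · rintro ⟨u, rfl, hu⟩ g - hg₁ hg₂
    have h := (T.norm_inner_apply_le hTdense u ⟨g, hg₁⟩).trans
      (mul_le_mul_of_nonneg_right hu (norm_nonneg _))
    rw [Real.norm_eq_abs] at h
    calc ⟪T u, g⟫ ^ 2 = |⟪T u, g⟫| ^ 2 := (sq_abs _).symm
      _ ≤ C ^ 2 * ‖T† ⟨g, hg₁⟩‖ ^ 2 := mul_pow C _ 2 ▸ pow_le_pow_left₀ (abs_nonneg _) h 2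
      _ ≤ C ^ 2 * (‖T† ⟨g, hg₁⟩‖ ^ 2 + ‖S ⟨g, hg₂⟩‖ ^ 2) := by
        gcongr
        exact le_add_of_nonneg_right (sq_nonneg _)
  · intro hest
    set N := L ⊓ S.ker
    have : CompleteSpace N :=
      (hL.inter (LinearPMap.IsClosed.isClosed_ker hSclosed)).completeSpace_coe
    refine T.exists_apply_eq_of_norm_inner_le hTdense hTclosed hC.le
      (T.norm_inner_le_of_forall_mem hTdense N (fun x ↦ ⟨hTL x, LinearPMap.mem_ker.2 (hST x)⟩)
        ⟨hfL, LinearPMap.mem_ker.2 hfS⟩ fun g ⟨hgL, hgS⟩ ↦ ?_)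
    obtain ⟨hg₂, hSg⟩ := LinearPMap.mem_ker.1 hgS
    have h := hest g hgL g.2 hg₂
    rw [hSg, norm_zero, zero_pow two_ne_zero, add_zero, ← mul_pow] at h
    rw [Real.norm_eq_abs, ← abs_of_nonneg (by positivity : 0 ≤ C * ‖T† g‖)]
    exact sq_le_sq.1 h

/-- Hörmander's lemma (Theorem 1.1.4 in [H1]): for a complex `H₁ →ᵀ H₂ →ˢ H₃` of
closed densely defined operators between Hilbert spaces, a closed subspace
`L ⊆ H₂` containing `Im T`, `f ∈ L ∩ Ker S` and `C > 0`, the existence of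
`u ∈ Dom T` with `T u = f` and `‖u‖ ≤ C` is equivalent to the estimate
`|⟨f,g⟩|² ≤ C²(‖T* g‖² + ‖S g‖²)` for all `g ∈ L ∩ Dom T* ∩ Dom S`. -/
theorem stmt17 {H1 H2 H3 : Type*}
    [NormedAddCommGroup H1] [InnerProductSpace ℝ H1] [CompleteSpace H1]
    [NormedAddCommGroup H2] [InnerProductSpace ℝ H2] [CompleteSpace H2]
    [NormedAddCommGroup H3] [InnerProductSpace ℝ H3] [CompleteSpace H3]
    (T : H1 →ₗ.[ℝ] H2) (S : H2 →ₗ.[ℝ] H3)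
    (hTdense : Dense (T.domain : Set H1)) (hTclosed : IsClosed (T.graph : Set (H1 × H2)))
    (hSdense : Dense (S.domain : Set H2)) (hSclosed : IsClosed (S.graph : Set (H2 × H3)))
    (hST : ∀ x : T.domain, ∃ h : (T x : H2) ∈ S.domain, S ⟨T x, h⟩ = 0)
    (L : Submodule ℝ H2) (hL : IsClosed (L : Set H2))
    (hTL : ∀ x : T.domain, (T x : H2) ∈ L)
    (f : H2) (hfL : f ∈ L) (hfS : ∃ h : f ∈ S.domain, S ⟨f, h⟩ = 0)
    (C : ℝ) (hC : 0 < C) :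
    (∃ u : T.domain, T u = f ∧ ‖(u : H1)‖ ≤ C) ↔
    (∀ g : H2, g ∈ L → ∀ (hg1 : g ∈ T.adjoint.domain) (hg2 : g ∈ S.domain),
      ⟪f, g⟫ ^ 2 ≤ C ^ 2 * (‖T.adjoint ⟨g, hg1⟩‖ ^ 2 + ‖S ⟨g, hg2⟩‖ ^ 2)) :=
  stmt17_general T S hTdense hTclosed hSclosed hST L hL hTL f hfL hfS C hC
end

section
/- Let H₁ →^T H₂ →^S H₃ be a complex of closed densely defined operators between Hilbert spaces. Suppose every sequence g_ν ∈ Dom(T*) ∩ Dom(S) with ‖g_ν‖ bounded, T* g_ν → 0 and S g_ν → 0 admits a strongly convergent subsequence. Then Ker(T*) ∩ Ker(S) is finite dimensional, and there is a constant C > 0 such that ‖g‖² ≤ C²(‖T* g‖² + ‖S g‖²) for all g ∈ Dom(T*) ∩ Dom(S) orthogonal to Ker(T*) ∩ Ker(S); moreover Ker(S) = (Ker(T*) ∩ Ker(S)) ⊕ Im(T) as an orthogonal direct sum. -/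
open scoped RealInnerProductSpace
open Filter

/-- The kernel `{x ∈ Dom T | T x = 0}` of a partially defined linear operator,
as a submodule of the source space. -/
def pKer {H H' : Type*} [NormedAddCommGroup H] [InnerProductSpace ℝ H]
    [NormedAddCommGroup H'] [InnerProductSpace ℝ H'] (T : H →ₗ.[ℝ] H') :
    Submodule ℝ H where
  carrier := {x | ∃ hx : x ∈ T.domain, T ⟨x, hx⟩ = 0}
  zero_mem' := ⟨T.domain.zero_mem, by
    have : (⟨0, T.domain.zero_mem⟩ : T.domain) = 0 := rfl
    rw [this, T.map_zero]⟩
  add_mem' := by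
    rintro a b ⟨ha, ea⟩ ⟨hb, eb⟩
    refine ⟨T.domain.add_mem ha hb, ?_⟩
    have : (⟨a + b, T.domain.add_mem ha hb⟩ : T.domain) = ⟨a, ha⟩ + ⟨b, hb⟩ := rfl
    rw [this, T.map_add, ea, eb, add_zero]
  smul_mem' := by
    rintro c a ⟨ha, ea⟩
    refine ⟨T.domain.smul_mem c ha, ?_⟩
    have : (⟨c • a, T.domain.smul_mem c ha⟩ : T.domain) = c • (⟨a, ha⟩ : T.domain) := rfl
    rw [this, T.map_smul, ea, smul_zero]

/-!
The compactness hypothesis makes the closed unit ball of `N = Ker T* ∩ Ker S` compact, and,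
applied to a normalized sequence violating the estimate, forces its limit to be a unit vector
in `N ∩ Nᗮ`. Since `Im T ⊆ Ker S`, we get `(Ker T*)ᗮ = closure (Im T) ⊆ Ker S`, so the estimate
bounds `T*` from below on `(Ker T*)ᗮ`. For `h ⊥ Ker T*` the functional `T* y ↦ ⟪h, y⟫` is then
bounded; by Riesz it is `⟪u, ·⟫`, and `T** = T` gives `h = T u`. Hence `Im T = (Ker T*)ᗮ`, and
`Ker S = N ⊕ Im T` by the modular law.
-/

open scoped Topology

section Kernel

variable {E F : Type*} [NormedAddCommGroup E] [InnerProductSpace ℝ E]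
  [NormedAddCommGroup F] [InnerProductSpace ℝ F]

theorem mem_pKer_iff_mem_graph {T : E →ₗ.[ℝ] F} {x : E} : x ∈ pKer T ↔ (x, 0) ∈ T.graph := by
  rw [LinearPMap.mem_graph_iff]
  constructor
  · rintro ⟨hx, hTx⟩
    exact ⟨⟨x, hx⟩, rfl, hTx⟩
  · rintro ⟨⟨y, hy⟩, rfl, hTy⟩
    exact ⟨hy, hTy⟩

theorem isClosed_pKer {T : E →ₗ.[ℝ] F} (hT : T.IsClosed) : IsClosed (pKer T : Set E) := by
  have : (pKer T : Set E) = (fun x => (x, (0 : F))) ⁻¹' T.graph :=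
    Set.ext fun _ => mem_pKer_iff_mem_graph
  rw [this]
  exact hT.preimage (continuous_id.prodMk continuous_const)

theorem mem_pKer_of_tendsto {T : E →ₗ.[ℝ] F} (hT : T.IsClosed) {g : ℕ → E}
    (hg : ∀ k, g k ∈ T.domain) {x : E} (hgx : Tendsto g atTop (𝓝 x))
    (hTg : Tendsto (fun k => T ⟨g k, hg k⟩) atTop (𝓝 0)) : x ∈ pKer T :=
  mem_pKer_iff_mem_graph.2 <| hT.mem_of_tendsto (hgx.prodMk_nhds hTg)
    (Eventually.of_forall fun k => T.mem_graph ⟨g k, hg k⟩)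

end Kernel

section Compactness

variable {E F G : Type*} [NormedAddCommGroup E] [InnerProductSpace ℝ E]
  [NormedAddCommGroup F] [InnerProductSpace ℝ F] [NormedAddCommGroup G] [InnerProductSpace ℝ G]

def HormanderCompactness (A : E →ₗ.[ℝ] F) (B : E →ₗ.[ℝ] G) : Prop :=
  ∀ (g : ℕ → E) (hgA : ∀ k, g k ∈ A.domain) (hgB : ∀ k, g k ∈ B.domain),
    (∃ C, ∀ k, ‖g k‖ ≤ C) →
    Tendsto (fun k => A ⟨g k, hgA k⟩) atTop (𝓝 0) →
    Tendsto (fun k => B ⟨g k, hgB k⟩) atTop (𝓝 0) →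
    ∃ (φ : ℕ → ℕ) (x : E), StrictMono φ ∧ Tendsto (g ∘ φ) atTop (𝓝 x)

variable {A : E →ₗ.[ℝ] F} {B : E →ₗ.[ℝ] G}

theorem finiteDimensional_pKer_inf (hA : A.IsClosed) (hB : B.IsClosed)
    (hAB : HormanderCompactness A B) : FiniteDimensional ℝ (pKer A ⊓ pKer B : Submodule ℝ E) := by
  set N := pKer A ⊓ pKer B
  have hN : IsClosed (N : Set E) := (isClosed_pKer hA).inter (isClosed_pKer hB)
  have hK : IsSeqCompact ((N : Set E) ∩ Metric.closedBall 0 1) := by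
    intro g hg
    obtain ⟨φ, x, hφ, hx⟩ := hAB g (fun k => (hg k).1.1.1) (fun k => (hg k).1.2.1)
      ⟨1, fun k => mem_closedBall_zero_iff.1 (hg k).2⟩
      (tendsto_const_nhds.congr fun k => (hg k).1.1.2.symm)
      (tendsto_const_nhds.congr fun k => (hg k).1.2.2.symm)
    exact ⟨x, (hN.inter Metric.isClosed_closedBall).mem_of_tendsto hx
      (Eventually.of_forall fun k => hg (φ k)), φ, hφ, hx⟩
  refine FiniteDimensional.of_isCompact_closedBall₀ ℝ one_pos ?_
  have hball :
      Metric.closedBall (0 : N) 1 = Subtype.val ⁻¹' ((N : Set E) ∩ Metric.closedBall 0 1) := by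
    ext x
    simp
  rw [hball]
  exact hN.isClosedEmbedding_subtypeVal.isCompact_preimage hK.isCompact

theorem exists_pos_le_norm_add_norm (hA : A.IsClosed) (hB : B.IsClosed)
    (hAB : HormanderCompactness A B) :
    ∃ ε > (0 : ℝ), ∀ (g : E) (hgA : g ∈ A.domain) (hgB : g ∈ B.domain),
      g ∈ (pKer A ⊓ pKer B)ᗮ → ‖g‖ = 1 → ε ≤ ‖A ⟨g, hgA⟩‖ + ‖B ⟨g, hgB⟩‖ := by
  by_contra! hcon
  choose g hgA hgB hperp hnorm hsmall using fun k : ℕ => hcon (1 / (k + 1)) Nat.one_div_pos_of_nat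
  have hA0 : Tendsto (fun k => A ⟨g k, hgA k⟩) atTop (𝓝 0) :=
    tendsto_zero_iff_norm_tendsto_zero.2 <| squeeze_zero (fun _ => norm_nonneg _)
      (fun k => by linarith [hsmall k, norm_nonneg (B ⟨g k, hgB k⟩)])
      tendsto_one_div_add_atTop_nhds_zero_nat
  have hB0 : Tendsto (fun k => B ⟨g k, hgB k⟩) atTop (𝓝 0) :=
    tendsto_zero_iff_norm_tendsto_zero.2 <| squeeze_zero (fun _ => norm_nonneg _)
      (fun k => by linarith [hsmall k, norm_nonneg (A ⟨g k, hgA k⟩)])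
      tendsto_one_div_add_atTop_nhds_zero_nat
  obtain ⟨φ, x, hφ, hx⟩ := hAB g hgA hgB ⟨1, fun k => (hnorm k).le⟩ hA0 hB0
  have hxN : x ∈ pKer A ⊓ pKer B :=
    ⟨mem_pKer_of_tendsto hA (fun k => hgA (φ k)) hx (hA0.comp hφ.tendsto_atTop),
      mem_pKer_of_tendsto hB (fun k => hgB (φ k)) hx (hB0.comp hφ.tendsto_atTop)⟩
  have hxperp : x ∈ (pKer A ⊓ pKer B)ᗮ := (Submodule.isClosed_orthogonal _).mem_of_tendsto hx
    (Eventually.of_forall fun k => hperp (φ k))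
  have hx1 : ‖x‖ = 1 := tendsto_nhds_unique hx.norm (by simp [hnorm])
  have hx0 : x = 0 := Submodule.disjoint_def.1 (Submodule.orthogonal_disjoint _) x hxN hxperp
  simp [hx0] at hx1

theorem exists_norm_sq_le_of_hormanderCompactness (hA : A.IsClosed) (hB : B.IsClosed)
    (hAB : HormanderCompactness A B) :
    ∃ C > (0 : ℝ), ∀ (g : E) (hgA : g ∈ A.domain) (hgB : g ∈ B.domain),
      g ∈ (pKer A ⊓ pKer B)ᗮ → ‖g‖ ^ 2 ≤ C ^ 2 * (‖A ⟨g, hgA⟩‖ ^ 2 + ‖B ⟨g, hgB⟩‖ ^ 2) := by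
  obtain ⟨ε, hε, hunit⟩ := exists_pos_le_norm_add_norm hA hB hAB
  refine ⟨√2 / ε, by positivity, fun g hgA hgB hg => ?_⟩
  set a := ‖A ⟨g, hgA⟩‖
  set b := ‖B ⟨g, hgB⟩‖
  have hlin : ε * ‖g‖ ≤ a + b := by
    rcases eq_or_ne g 0 with rfl | hg0
    · simp only [norm_zero, mul_zero]
      positivity
    have hpos : 0 < ‖g‖ := norm_pos_iff.2 hg0
    have := hunit (‖g‖⁻¹ • g) (A.domain.smul_mem _ hgA) (B.domain.smul_mem _ hgB)
      (Submodule.smul_mem _ _ hg) (norm_smul_inv_norm hg0)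
    rw [show A ⟨‖g‖⁻¹ • g, _⟩ = ‖g‖⁻¹ • A ⟨g, hgA⟩ from A.map_smul _ ⟨g, hgA⟩,
      show B ⟨‖g‖⁻¹ • g, _⟩ = ‖g‖⁻¹ • B ⟨g, hgB⟩ from B.map_smul _ ⟨g, hgB⟩,
      norm_smul, norm_smul, norm_inv, norm_norm, ← mul_add, le_inv_mul_iff₀ hpos] at this
    linarith
  calc ‖g‖ ^ 2 = ε⁻¹ ^ 2 * (ε * ‖g‖) ^ 2 := by field_simp
    _ ≤ ε⁻¹ ^ 2 * (a + b) ^ 2 := by gcongr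
    _ ≤ ε⁻¹ ^ 2 * (2 * (a ^ 2 + b ^ 2)) := by gcongr; nlinarith [sq_nonneg (a - b)]
    _ = (√2 / ε) ^ 2 * (a ^ 2 + b ^ 2) := by
      rw [div_pow, Real.sq_sqrt zero_le_two]; ring

end Compactness

section Adjoint

variable {E F : Type*} [NormedAddCommGroup E] [InnerProductSpace ℝ E] [CompleteSpace E]
  [NormedAddCommGroup F] [InnerProductSpace ℝ F] {T : E →ₗ.[ℝ] F}

theorem range_orthogonal_eq_pKer_adjoint (hT : Dense (T.domain : Set E)) :
    (LinearMap.range T.toFun)ᗮ = pKer T.adjoint := by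
  ext z
  rw [Submodule.mem_orthogonal']
  constructor
  · intro hz
    have key : ∀ u : T.domain, ⟪(0 : E), (u : E)⟫ = ⟪z, T u⟫ := fun u => by
      rw [inner_zero_left]
      exact (hz _ ⟨u, rfl⟩).symm
    exact ⟨LinearPMap.mem_adjoint_domain_of_exists z ⟨0, key⟩,
      LinearPMap.adjoint_apply_eq hT _ key⟩
  · rintro ⟨hz, hz0⟩ _ ⟨u, rfl⟩
    have := T.adjoint_isFormalAdjoint hT ⟨z, hz⟩ u
    rw [hz0, inner_zero_left] at this
    exact this.symm

theorem orthogonal_pKer_adjoint_le [CompleteSpace F] (hT : Dense (T.domain : Set E))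
    {K : Submodule ℝ F} (hK : IsClosed (K : Set F)) (hTK : LinearMap.range T.toFun ≤ K) :
    (pKer T.adjoint)ᗮ ≤ K := by
  rw [← range_orthogonal_eq_pKer_adjoint hT, Submodule.orthogonal_orthogonal_eq_closure]
  exact Submodule.topologicalClosure_minimal _ hTK hK

theorem abs_inner_le_of_mem_orthogonal_pKer_adjoint [CompleteSpace F]
    (hT : Dense (T.domain : Set E)) {C : ℝ}
    (hC : ∀ (y : F) (hy : y ∈ T.adjoint.domain), y ∈ (pKer T.adjoint)ᗮ →
      ‖y‖ ≤ C * ‖T.adjoint ⟨y, hy⟩‖)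
    {h : F} (hh : h ∈ (pKer T.adjoint)ᗮ) (y : T.adjoint.domain) :
    |⟪h, (y : F)⟫| ≤ C * ‖h‖ * ‖T.adjoint y‖ := by
  have : CompleteSpace (pKer T.adjoint) :=
    (isClosed_pKer (LinearPMap.adjoint_isClosed hT)).completeSpace_coe
  obtain ⟨y, hy⟩ := y
  obtain ⟨k, hk, r, hr, rfl⟩ := (pKer T.adjoint).exists_add_mem_mem_orthogonal y
  have ⟨hkd, hk0⟩ := hk
  have hrd : r ∈ T.adjoint.domain := by
    simpa using T.adjoint.domain.sub_mem hy hkd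
  have hTr : T.adjoint ⟨k + r, hy⟩ = T.adjoint ⟨r, hrd⟩ := by
    rw [show T.adjoint ⟨k + r, hy⟩ = _ from T.adjoint.map_add ⟨k, hkd⟩ ⟨r, hrd⟩, hk0, zero_add]
  rw [hTr, inner_add_right, Submodule.inner_left_of_mem_orthogonal hk hh, zero_add]
  calc |⟪h, r⟫| ≤ ‖h‖ * ‖r‖ := abs_real_inner_le_norm h r
    _ ≤ ‖h‖ * (C * ‖T.adjoint ⟨r, hrd⟩‖) := by gcongr; exact hC r hrd hr
    _ = C * ‖h‖ * ‖T.adjoint ⟨r, hrd⟩‖ := by ring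

theorem exists_inner_eq_of_abs_le {V : Type*} [AddCommGroup V] [Module ℝ V]
    (L : V →ₗ[ℝ] E) (φ : V →ₗ[ℝ] ℝ) {M : ℝ} (hφ : ∀ v, |φ v| ≤ M * ‖L v‖) :
    ∃ u : E, ∀ v, ⟪u, L v⟫ = φ v := by
  have hker : LinearMap.ker L ≤ LinearMap.ker φ := fun v hv => by
    have := hφ v
    rw [LinearMap.mem_ker] at hv ⊢
    rw [hv, norm_zero, mul_zero] at this
    exact abs_nonpos_iff.1 this
  let f : LinearMap.range L →ₗ[ℝ] ℝ :=
    (LinearMap.ker L).liftQ φ hker ∘ₗ L.quotKerEquivRange.symm.toLinearMap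
  have hf : ∀ v, f ⟨L v, LinearMap.mem_range_self L v⟩ = φ v := fun v => by
    simp [f, LinearMap.quotKerEquivRange_symm_apply_image]
  have hfM : ∀ r, ‖f r‖ ≤ M * ‖r‖ := by
    rintro ⟨_, v, rfl⟩
    rw [Real.norm_eq_abs, hf]
    exact hφ v
  obtain ⟨g, hg, -⟩ := exists_extension_norm_eq _ (f.mkContinuous M hfM)
  refine ⟨(InnerProductSpace.toDual ℝ E).symm g, fun v => ?_⟩
  rw [InnerProductSpace.toDual_symm_apply, hg ⟨L v, LinearMap.mem_range_self L v⟩,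
    LinearMap.mkContinuous_apply, hf]

theorem mem_graph_of_inner_adjoint_eq [CompleteSpace F] (hT : Dense (T.domain : Set E))
    (hTc : T.IsClosed)
    {u : E} {h : F} (hu : ∀ y : T.adjoint.domain, ⟪u, T.adjoint y⟫ = ⟪h, (y : F)⟫) :
    (u, h) ∈ T.graph := by
  let Γ : Submodule ℝ (WithLp 2 (E × F)) :=
    T.graph.comap (WithLp.linearEquiv 2 ℝ (E × F)).toLinearMap
  have hΓ : IsClosed (Γ : Set (WithLp 2 (E × F))) :=
    hTc.preimage (WithLp.prod_continuous_ofLp 2 E F)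
  suffices WithLp.toLp 2 (u, h) ∈ Γᗮᗮ by
    rwa [Submodule.orthogonal_orthogonal_eq_closure, hΓ.submodule_topologicalClosure_eq] at this
  rw [Submodule.mem_orthogonal]
  rintro ⟨a, b⟩ hw
  -- `(a, b) ⊥ graph T` says exactly that `b ∈ Dom T*` with `T* b = -a`.
  have key : ∀ x : T.domain, ⟪-a, (x : E)⟫ = ⟪b, T x⟫ := fun x => by
    have := Submodule.inner_right_of_mem_orthogonal
      (u := WithLp.toLp 2 ((x : E), T x)) (T.mem_graph x) hw
    rw [WithLp.prod_inner_apply] at this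
    rw [inner_neg_left]
    linarith [real_inner_comm a (x : E), real_inner_comm b (T x)]
  have hb : b ∈ T.adjoint.domain := LinearPMap.mem_adjoint_domain_of_exists b ⟨-a, key⟩
  have := hu ⟨b, hb⟩
  rw [LinearPMap.adjoint_apply_eq hT _ key, inner_neg_right] at this
  rw [WithLp.prod_inner_apply, WithLp.ofLp_toLp, WithLp.ofLp_toLp]
  linarith [real_inner_comm a u, real_inner_comm b h]

theorem range_eq_orthogonal_pKer_adjoint [CompleteSpace F] (hT : Dense (T.domain : Set E))
    (hTc : T.IsClosed) {C : ℝ}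
    (hC : ∀ (y : F) (hy : y ∈ T.adjoint.domain), y ∈ (pKer T.adjoint)ᗮ →
      ‖y‖ ≤ C * ‖T.adjoint ⟨y, hy⟩‖) :
    LinearMap.range T.toFun = (pKer T.adjoint)ᗮ := by
  refine le_antisymm (range_orthogonal_eq_pKer_adjoint hT ▸ Submodule.le_orthogonal_orthogonal _)
    fun h hh => ?_
  obtain ⟨u, hu⟩ := exists_inner_eq_of_abs_le T.adjoint.toFun
    ((innerₛₗ ℝ h).comp T.adjoint.domain.subtype)
    (abs_inner_le_of_mem_orthogonal_pKer_adjoint hT hC hh)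
  obtain ⟨x, rfl, hx⟩ := T.mem_graph_iff.1 (mem_graph_of_inner_adjoint_eq hT hTc hu)
  exact ⟨x, hx⟩

end Adjoint

theorem stmt18_general {H1 H2 H3 : Type*}
    [NormedAddCommGroup H1] [InnerProductSpace ℝ H1] [CompleteSpace H1]
    [NormedAddCommGroup H2] [InnerProductSpace ℝ H2] [CompleteSpace H2]
    [NormedAddCommGroup H3] [InnerProductSpace ℝ H3]
    (T : H1 →ₗ.[ℝ] H2) (S : H2 →ₗ.[ℝ] H3)
    (hTdense : Dense (T.domain : Set H1)) (hTclosed : IsClosed (T.graph : Set (H1 × H2)))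
    (hSclosed : IsClosed (S.graph : Set (H2 × H3)))
    (hST : ∀ x : T.domain, ∃ h : (T x : H2) ∈ S.domain, S ⟨T x, h⟩ = 0)
    (hcpt : ∀ (g : ℕ → H2) (hgT : ∀ k, g k ∈ T.adjoint.domain)
      (hgS : ∀ k, g k ∈ S.domain),
      (∃ B, ∀ k, ‖g k‖ ≤ B) →
      Tendsto (fun k => T.adjoint ⟨g k, hgT k⟩) atTop (nhds 0) →
      Tendsto (fun k => S ⟨g k, hgS k⟩) atTop (nhds 0) →
      ∃ (φ : ℕ → ℕ) (x : H2), StrictMono φ ∧ Tendsto (g ∘ φ) atTop (nhds x)) :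
    FiniteDimensional ℝ (pKer T.adjoint ⊓ pKer S : Submodule ℝ H2) ∧
    (∃ C > (0 : ℝ), ∀ (g : H2) (hg1 : g ∈ T.adjoint.domain) (hg2 : g ∈ S.domain),
      g ∈ (pKer T.adjoint ⊓ pKer S)ᗮ →
      ‖g‖ ^ 2 ≤ C ^ 2 * (‖T.adjoint ⟨g, hg1⟩‖ ^ 2 + ‖S ⟨g, hg2⟩‖ ^ 2)) ∧
    pKer S = (pKer T.adjoint ⊓ pKer S) ⊔ LinearMap.range T.toFun ∧
    (∀ x ∈ pKer T.adjoint ⊓ pKer S, ∀ y ∈ LinearMap.range T.toFun, ⟪x, y⟫ = 0) := by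
  have hTadj : T.adjoint.IsClosed := LinearPMap.adjoint_isClosed hTdense
  have hrange : LinearMap.range T.toFun ≤ pKer S := by
    rintro _ ⟨x, rfl⟩
    exact hST x
  have hKerS : (pKer T.adjoint)ᗮ ≤ pKer S :=
    orthogonal_pKer_adjoint_le hTdense (isClosed_pKer hSclosed) hrange
  obtain ⟨C, hC, hest⟩ := exists_norm_sq_le_of_hormanderCompactness hTadj hSclosed hcpt
  have hTadj_bdd : ∀ (y : H2) (hy : y ∈ T.adjoint.domain), y ∈ (pKer T.adjoint)ᗮ →
      ‖y‖ ≤ C * ‖T.adjoint ⟨y, hy⟩‖ := by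
    intro y hy hyK
    obtain ⟨hyS, hSy⟩ := hKerS hyK
    have := hest y hy hyS (Submodule.orthogonal_le inf_le_left hyK)
    rw [hSy, norm_zero, zero_pow two_ne_zero, add_zero, ← mul_pow] at this
    exact le_of_pow_le_pow_left₀ two_ne_zero (by positivity) this
  have hR := range_eq_orthogonal_pKer_adjoint hTdense hTclosed hTadj_bdd
  have : CompleteSpace (pKer T.adjoint) := (isClosed_pKer hTadj).completeSpace_coe
  refine ⟨finiteDimensional_pKer_inf hTadj hSclosed hcpt, ⟨C, hC, hest⟩, ?_, ?_⟩
  -- modular law for `(Ker T*)ᗮ ≤ Ker S`, then `Ker T* ⊔ (Ker T*)ᗮ = ⊤`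
  · rw [hR, sup_comm, ← sup_inf_assoc_of_le _ hKerS, sup_comm,
      Submodule.sup_orthogonal_of_hasOrthogonalProjection, top_inf_eq]
  · rintro x ⟨hx, -⟩ y hy
    exact Submodule.inner_right_of_mem_orthogonal hx (hR ▸ hy)

/-- Hörmander's compactness lemma (Theorems 1.1.2/1.1.3 in [H1]): if from every
bounded sequence `g_ν ∈ Dom T* ∩ Dom S` with `T* g_ν → 0` and `S g_ν → 0` one can
extract a strongly convergent subsequence, then `Ker T* ∩ Ker S` is finite
dimensional, the estimate `‖g‖² ≤ C²(‖T* g‖² + ‖S g‖²)` holds on the orthogonal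
complement of `Ker T* ∩ Ker S`, and `Ker S = (Ker T* ∩ Ker S) ⊕ Im T`
orthogonally. -/
theorem stmt18 {H1 H2 H3 : Type*}
    [NormedAddCommGroup H1] [InnerProductSpace ℝ H1] [CompleteSpace H1]
    [NormedAddCommGroup H2] [InnerProductSpace ℝ H2] [CompleteSpace H2]
    [NormedAddCommGroup H3] [InnerProductSpace ℝ H3] [CompleteSpace H3]
    (T : H1 →ₗ.[ℝ] H2) (S : H2 →ₗ.[ℝ] H3)
    (hTdense : Dense (T.domain : Set H1)) (hTclosed : IsClosed (T.graph : Set (H1 × H2)))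
    (hSdense : Dense (S.domain : Set H2)) (hSclosed : IsClosed (S.graph : Set (H2 × H3)))
    (hST : ∀ x : T.domain, ∃ h : (T x : H2) ∈ S.domain, S ⟨T x, h⟩ = 0)
    (hcpt : ∀ (g : ℕ → H2) (hgT : ∀ k, g k ∈ T.adjoint.domain)
      (hgS : ∀ k, g k ∈ S.domain),
      (∃ B, ∀ k, ‖g k‖ ≤ B) →
      Tendsto (fun k => T.adjoint ⟨g k, hgT k⟩) atTop (nhds 0) →
      Tendsto (fun k => S ⟨g k, hgS k⟩) atTop (nhds 0) →
      ∃ (φ : ℕ → ℕ) (x : H2), StrictMono φ ∧ Tendsto (g ∘ φ) atTop (nhds x)) :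
    FiniteDimensional ℝ (pKer T.adjoint ⊓ pKer S : Submodule ℝ H2) ∧
    (∃ C > (0 : ℝ), ∀ (g : H2) (hg1 : g ∈ T.adjoint.domain) (hg2 : g ∈ S.domain),
      g ∈ (pKer T.adjoint ⊓ pKer S)ᗮ →
      ‖g‖ ^ 2 ≤ C ^ 2 * (‖T.adjoint ⟨g, hg1⟩‖ ^ 2 + ‖S ⟨g, hg2⟩‖ ^ 2)) ∧
    pKer S = (pKer T.adjoint ⊓ pKer S) ⊔ LinearMap.range T.toFun ∧
    (∀ x ∈ pKer T.adjoint ⊓ pKer S, ∀ y ∈ LinearMap.range T.toFun, ⟪x, y⟫ = 0) :=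
  stmt18_general T S hTdense hTclosed hSclosed hST hcpt
end
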